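/- arXiv:1906.05938 — 4 statements merged into one kernel-verified Lean document; each statement's English description precedes it below -/
import Mathlib

section
/- Let W : ℝ → ℝ be continuous and nonnegative, and let ψ : ℝ → ℝ be differentiable and strictly increasing with ψ'(z) = √(2W(ψ(z))) for every z ∈ ℝ, and with ψ(z) → 1 as z → +∞ and ψ(z) → −1 as z → −∞. Then ∫_ℝ ψ'(z)² dz = ∫_{−1}^{1} √(2W(t)) dt; in particular the energy ∫_ℝ ψ'(z)² dz is finite. -/
/-!
Since `ψ' = g ∘ ψ` with `g = √(2W)`, the energy density `ψ'² = (g ∘ ψ) ψ'` is the derivative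
of `G ∘ ψ` for a primitive `G` of `g`. This derivative is nonnegative and `G ∘ ψ` has limits
`G (-1)` and `G 1` at `∓∞`, so it is integrable on the line with integral `G 1 - G (-1)`.
-/

open Filter MeasureTheory Topology

theorem integrable_of_hasDerivAt_of_nonneg_of_tendsto {f f' : ℝ → ℝ} {m n : ℝ}
    (hderiv : ∀ x, HasDerivAt f (f' x) x) (hf' : ∀ x, 0 ≤ f' x)
    (hbot : Tendsto f atBot (𝓝 m)) (htop : Tendsto f atTop (𝓝 n)) : Integrable f' := by
  have hint : ∀ a b, IntegrableOn f' (Set.Ioc a b) := fun a b =>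
    intervalIntegral.integrableOn_deriv_of_nonneg
      (HasDerivAt.continuousOn fun x _ => hderiv x) (fun x _ => hderiv x) fun x _ => hf' x
  refine integrable_of_intervalIntegral_norm_tendsto (n - m) (fun x => hint (-x) x)
    tendsto_neg_atTop_atBot tendsto_id ?_
  refine (htop.sub (hbot.comp tendsto_neg_atTop_atBot)).congr' ?_
  filter_upwards [eventually_ge_atTop 0] with x hx
  have hle : -x ≤ x := by linarith
  calc f x - f (-x) = ∫ y in -x..x, f' y :=
        (intervalIntegral.integral_eq_sub_of_hasDerivAt (fun y _ => hderiv y)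
          ((intervalIntegrable_iff_integrableOn_Ioc_of_le hle).2 (hint _ _))).symm
    _ = ∫ y in -x..x, ‖f' y‖ :=
        intervalIntegral.integral_congr fun y _ => (Real.norm_of_nonneg (hf' y)).symm

theorem integrable_and_integral_comp_mul_deriv {g ψ : ℝ → ℝ} {l u : ℝ}
    (hg : Continuous g) (hψ : Differentiable ℝ ψ) (hnonneg : ∀ z, 0 ≤ g (ψ z) * deriv ψ z)
    (hbot : Tendsto ψ atBot (𝓝 l)) (htop : Tendsto ψ atTop (𝓝 u)) :
    Integrable (fun z => g (ψ z) * deriv ψ z) ∧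
      ∫ z, g (ψ z) * deriv ψ z = ∫ t in l..u, g t := by
  set G : ℝ → ℝ := fun x => ∫ t in l..x, g t
  have hGderiv : ∀ x, HasDerivAt G (g x) x := fun x =>
    (hg.integral_hasStrictDerivAt l x).hasDerivAt
  have hG : Continuous G := continuous_iff_continuousAt.2 fun x => (hGderiv x).continuousAt
  have hderiv : ∀ z, HasDerivAt (G ∘ ψ) (g (ψ z) * deriv ψ z) z := fun z =>
    (hGderiv (ψ z)).comp z (hψ z).hasDerivAt
  have hGbot : Tendsto (G ∘ ψ) atBot (𝓝 (G l)) := (hG.tendsto l).comp hbot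
  have hGtop : Tendsto (G ∘ ψ) atTop (𝓝 (G u)) := (hG.tendsto u).comp htop
  have hint := integrable_of_hasDerivAt_of_nonneg_of_tendsto hderiv hnonneg hGbot hGtop
  refine ⟨hint, ?_⟩
  rw [integral_of_hasDerivAt_of_tendsto hderiv hint hGbot hGtop]
  simp [G]

theorem energy_of_heteroclinic_profile_general (W ψ : ℝ → ℝ)
    (hWc : Continuous W)
    (hψ : Differentiable ℝ ψ)
    (hode : ∀ z : ℝ, deriv ψ z = Real.sqrt (2 * W (ψ z)))
    (htop : Tendsto ψ atTop (nhds 1))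
    (hbot : Tendsto ψ atBot (nhds (-1))) :
    Integrable (fun z : ℝ => (deriv ψ z) ^ 2) ∧
    (∫ z : ℝ, (deriv ψ z) ^ 2) = ∫ t in (-1 : ℝ)..1, Real.sqrt (2 * W t) := by
  have hsq : (fun z => deriv ψ z ^ 2) = fun z => Real.sqrt (2 * W (ψ z)) * deriv ψ z := by
    ext z
    rw [sq, ← hode]
  rw [hsq]
  refine integrable_and_integral_comp_mul_deriv (g := fun t => Real.sqrt (2 * W t))
    (by fun_prop) hψ (fun z => ?_) hbot htop
  rw [← hode]
  exact mul_self_nonneg _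

theorem energy_of_heteroclinic_profile (W ψ : ℝ → ℝ)
    (hWc : Continuous W) (hWnn : ∀ t : ℝ, 0 ≤ W t)
    (hψ : Differentiable ℝ ψ) (hmono : StrictMono ψ)
    (hode : ∀ z : ℝ, deriv ψ z = Real.sqrt (2 * W (ψ z)))
    (htop : Tendsto ψ atTop (nhds 1))
    (hbot : Tendsto ψ atBot (nhds (-1))) :
    Integrable (fun z : ℝ => (deriv ψ z) ^ 2) ∧
    (∫ z : ℝ, (deriv ψ z) ^ 2) = ∫ t in (-1 : ℝ)..1, Real.sqrt (2 * W t) :=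
  energy_of_heteroclinic_profile_general W ψ hWc hψ hode htop hbot
end

section
/- (Existence of the heteroclinic) Let W : ℝ → ℝ be an even double-well potential: W is C³, W ≥ 0, W vanishes exactly at ±1, W''(±1) > 0, W''(0) < 0, and W'(t) < 0 for t ∈ (0,1). Then there exists a twice continuously differentiable, strictly increasing function ψ : ℝ → ℝ such that ψ(0) = 0, −1 < ψ(z) < 1 for all z, ψ''(z) = W'(ψ(z)) and ψ'(z)² = 2W(ψ(z)) for every z ∈ ℝ, and ψ(z) → ±1 as z → ±∞. -/
open Filter Set intervalIntegral Real

noncomputable def hetG (W : ℝ → ℝ) (s : ℝ) : ℝ := (Real.sqrt (2 * W s))⁻¹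

noncomputable def hetF (W : ℝ → ℝ) (t : ℝ) : ℝ := ∫ s in (0:ℝ)..t, hetG W s

section aux

variable {W : ℝ → ℝ}

lemma hetWpos (hWnn : ∀ t : ℝ, 0 ≤ W t) (hWzero : ∀ t : ℝ, W t = 0 ↔ t = 1 ∨ t = -1)
    {t : ℝ} (ht : t ∈ Ioo (-1:ℝ) 1) : 0 < W t := by
  rcases (hWnn t).lt_or_eq with h | h
  · exact h
  · rcases (hWzero t).1 h.symm with rfl | rfl
    · exact absurd ht.2 (lt_irrefl _)
    · exact absurd ht.1 (lt_irrefl _)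

lemma hetGpos (hWnn : ∀ t : ℝ, 0 ≤ W t) (hWzero : ∀ t : ℝ, W t = 0 ↔ t = 1 ∨ t = -1)
    {t : ℝ} (ht : t ∈ Ioo (-1:ℝ) 1) : 0 < hetG W t := by
  have h1 := hetWpos hWnn hWzero ht
  have : 0 < Real.sqrt (2 * W t) := Real.sqrt_pos.2 (by linarith)
  exact inv_pos.2 this

lemma hetGcontOn (hW3 : ContDiff ℝ 3 W) (hWnn : ∀ t : ℝ, 0 ≤ W t)
    (hWzero : ∀ t : ℝ, W t = 0 ↔ t = 1 ∨ t = -1) :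
    ContinuousOn (hetG W) (Ioo (-1:ℝ) 1) := by
  apply ContinuousOn.inv₀
  · exact (Real.continuous_sqrt.comp (continuous_const.mul hW3.continuous)).continuousOn
  · intro t ht
    exact ne_of_gt (Real.sqrt_pos.2 (by have := hetWpos hWnn hWzero ht; linarith))

/-- FTC: derivative of hetF inside the interval. -/
lemma hetF_hasDerivAt (hW3 : ContDiff ℝ 3 W) (hWnn : ∀ t : ℝ, 0 ≤ W t)
    (hWzero : ∀ t : ℝ, W t = 0 ↔ t = 1 ∨ t = -1)
    {t : ℝ} (ht : t ∈ Ioo (-1:ℝ) 1) : HasDerivAt (hetF W) (hetG W t) t := by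
  have h0 : (0:ℝ) ∈ Ioo (-1:ℝ) 1 := by constructor <;> norm_num
  have hsub : uIcc (0:ℝ) t ⊆ Ioo (-1:ℝ) 1 := by
    intro x hx
    rcases mem_uIcc.1 hx with h | h <;>
      exact ⟨by rcases h with ⟨a,b⟩; nlinarith [ht.1, ht.2, h0.1, h0.2],
             by rcases h with ⟨a,b⟩; nlinarith [ht.1, ht.2, h0.1, h0.2]⟩
  have hint : IntervalIntegrable (hetG W) MeasureTheory.volume 0 t :=
    ((hetGcontOn hW3 hWnn hWzero).mono hsub).intervalIntegrable
  have hct : ContinuousAt (hetG W) t :=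
    (hetGcontOn hW3 hWnn hWzero).continuousAt (isOpen_Ioo.mem_nhds ht)
  exact integral_hasDerivAt_right hint
    (ContinuousOn.stronglyMeasurableAtFilter isOpen_Ioo (hetGcontOn hW3 hWnn hWzero) t ht) hct




lemma hetK (hW3 : ContDiff ℝ 3 W) (hWnn : ∀ t : ℝ, 0 ≤ W t)
    (hWzero : ∀ t : ℝ, W t = 0 ↔ t = 1 ∨ t = -1) :
    ∃ K : ℝ, 0 < K ∧ ∀ s ∈ Icc (0:ℝ) 1, W s ≤ K * (1 - s)^2 := by
  have hW1 : W 1 = 0 := (hWzero 1).2 (Or.inl rfl)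
  have hWd : Differentiable ℝ W := hW3.differentiable (by norm_num)
  have hW'c2 : ContDiff ℝ 2 (deriv W) := by
    have h3 : ContDiff ℝ ((2:ℕ) + 1) W := by exact_mod_cast hW3
    exact ((contDiff_succ_iff_deriv).1 h3).2.2
  have hW'd : Differentiable ℝ (deriv W) := hW'c2.differentiable (by norm_num)
  have hW''c : Continuous (deriv (deriv W)) := by
    have h2 : ContDiff ℝ ((1:ℕ) + 1) (deriv W) := by exact_mod_cast hW'c2
    exact (((contDiff_succ_iff_deriv).1 h2).2.2).continuous
  have hW'1 : deriv W 1 = 0 := by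
    have hmin : IsLocalMin W 1 := by
      refine Filter.Eventually.of_forall fun x => ?_
      simpa [hW1] using hWnn x
    exact hmin.deriv_eq_zero
  obtain ⟨C, hC⟩ : ∃ C, ∀ u ∈ Icc (0:ℝ) 1, |deriv (deriv W) u| ≤ C := by
    obtain ⟨C, hC⟩ := (isCompact_Icc (a := (0:ℝ)) (b := 1)).exists_bound_of_continuousOn
      hW''c.continuousOn
    exact ⟨C, fun u hu => by simpa using hC u hu⟩
  have hC0 : 0 ≤ C := le_trans (abs_nonneg _) (hC 1 (by norm_num))
  have h1 : ∀ u ∈ Icc (0:ℝ) 1, |deriv W u| ≤ C * (1 - u) := by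
    intro u hu
    have hsub : Icc u 1 ⊆ Icc (0:ℝ) 1 := Icc_subset_Icc hu.1 le_rfl
    have := (convex_Icc u 1).norm_image_sub_le_of_norm_deriv_le (f := deriv W)
      (fun x hx => hW'd x) (fun x hx => by simpa using hC x (hsub hx))
      (right_mem_Icc.2 hu.2) (left_mem_Icc.2 hu.2)
    rw [hW'1] at this
    have habs : |u - 1| = 1 - u := by rw [abs_sub_comm]; exact abs_of_nonneg (by linarith [hu.2])
    simp only [Real.norm_eq_abs, sub_zero] at this
    rw [habs] at this
    exact this
  refine ⟨C + 1, by positivity, ?_⟩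
  intro s hs
  have hsub : Icc s 1 ⊆ Icc (0:ℝ) 1 := Icc_subset_Icc hs.1 le_rfl
  have h2 := (convex_Icc s 1).norm_image_sub_le_of_norm_deriv_le (f := W)
    (fun x hx => hWd x) (C := C * (1 - s))
    (fun x hx => by
      have := h1 x (hsub hx)
      have h1x : 1 - x ≤ 1 - s := by linarith [hx.1]
      calc ‖deriv W x‖ = |deriv W x| := rfl
        _ ≤ C * (1 - x) := this
        _ ≤ C * (1 - s) := by nlinarith)
    (right_mem_Icc.2 hs.2) (left_mem_Icc.2 hs.2)
  rw [hW1] at h2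
  have habs : |s - 1| = 1 - s := by rw [abs_sub_comm]; exact abs_of_nonneg (by linarith [hs.2])
  simp only [Real.norm_eq_abs, sub_zero, abs_of_nonneg (hWnn s)] at h2
  rw [habs] at h2
  nlinarith [hWnn s]






lemma hetFodd (heven : ∀ t : ℝ, W (-t) = W t) (t : ℝ) : hetF W (-t) = - hetF W t := by
  have hg : ∀ s, hetG W (-s) = hetG W s := fun s => by simp [hetG, heven s]
  have h := intervalIntegral.integral_comp_neg (a := (0:ℝ)) (b := t) (fun s => hetG W s)
  simp only [hg, neg_zero] at h
  -- h : ∫ x in 0..t, hetG W x = ∫ x in -t..0, hetG W x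
  rw [hetF, hetF, h, intervalIntegral.integral_symm]

lemma hetFtop (hW3 : ContDiff ℝ 3 W) (hWnn : ∀ t : ℝ, 0 ≤ W t)
    (hWzero : ∀ t : ℝ, W t = 0 ↔ t = 1 ∨ t = -1) :
    Tendsto (hetF W) (nhdsWithin 1 (Iio 1)) atTop := by
  obtain ⟨K, hK0, hK⟩ := hetK hW3 hWnn hWzero
  set c : ℝ := (Real.sqrt (2 * K))⁻¹ with hc
  have hc0 : 0 < c := inv_pos.2 (Real.sqrt_pos.2 (by linarith))
  -- lower bound for F on [0,1)
  have hlow : ∀ t ∈ Ico (0:ℝ) 1, c * Real.log (1 - t)⁻¹ ≤ hetF W t := by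
    intro t ht
    have ht1 : 0 < 1 - t := by linarith [ht.2]
    -- pointwise bound on [0, t]
    have hpt : ∀ s ∈ Icc (0:ℝ) t, c * (1 - s)⁻¹ ≤ hetG W s := by
      intro s hsm
      have hs01 : s ∈ Icc (0:ℝ) 1 := ⟨hsm.1, le_trans hsm.2 (le_of_lt ht.2)⟩
      have hs1 : 0 < 1 - s := by have := lt_of_le_of_lt hsm.2 ht.2; linarith
      have hb : Real.sqrt (2 * W s) ≤ Real.sqrt (2 * K) * (1 - s) := by
        have : 2 * W s ≤ (Real.sqrt (2 * K) * (1 - s))^2 := by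
          rw [mul_pow, Real.sq_sqrt (by linarith : (0:ℝ) ≤ 2 * K)]
          nlinarith [hK s hs01]
        calc Real.sqrt (2 * W s) ≤ Real.sqrt ((Real.sqrt (2 * K) * (1 - s))^2) :=
              Real.sqrt_le_sqrt this
          _ = Real.sqrt (2 * K) * (1 - s) := Real.sqrt_sq (by positivity)
      have hpos : 0 < Real.sqrt (2 * K) * (1 - s) := by positivity
      have hWs := hetWpos hWnn hWzero (⟨by linarith [hsm.1], lt_of_le_of_lt hsm.2 ht.2⟩)
      have hsq : (0:ℝ) < Real.sqrt (2 * W s) := Real.sqrt_pos.2 (by linarith)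
      have := one_div_le_one_div_of_le hsq hb
      rw [hetG]
      calc c * (1 - s)⁻¹ = (Real.sqrt (2 * K) * (1 - s))⁻¹ := by
            rw [mul_inv]
        _ ≤ (Real.sqrt (2 * W s))⁻¹ := by
            rw [← one_div, ← one_div]; exact this
    -- integrability
    have hsubIoo : Icc (0:ℝ) t ⊆ Ioo (-1:ℝ) 1 := fun x hx =>
      ⟨by linarith [hx.1], lt_of_le_of_lt hx.2 ht.2⟩
    have hgint : IntervalIntegrable (hetG W) MeasureTheory.volume 0 t := by
      apply ContinuousOn.intervalIntegrable
      rw [uIcc_of_le ht.1]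
      exact (hetGcontOn hW3 hWnn hWzero).mono hsubIoo
    have hfint : IntervalIntegrable (fun s => c * (1 - s)⁻¹) MeasureTheory.volume 0 t := by
      apply ContinuousOn.intervalIntegrable
      apply ContinuousOn.mul continuousOn_const
      apply ContinuousOn.inv₀ (by fun_prop)
      intro x hx
      rw [uIcc_of_le ht.1] at hx
      have : x < 1 := lt_of_le_of_lt hx.2 ht.2
      intro h; linarith [sub_eq_zero.mp h]
    have hmono := intervalIntegral.integral_mono_on ht.1 hfint hgint hpt
    have hcalc : ∫ s in (0:ℝ)..t, c * (1 - s)⁻¹ = c * Real.log (1 - t)⁻¹ := by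
      rw [intervalIntegral.integral_const_mul]
      have h1 : (∫ s in (0:ℝ)..t, (1 - s)⁻¹) = ∫ x in (1 - t)..(1:ℝ), x⁻¹ := by
        have := intervalIntegral.integral_comp_sub_left (a := (0:ℝ)) (b := t)
          (fun x => x⁻¹) 1
        simpa using this
      rw [h1, integral_inv_of_pos ht1 one_pos]
      rw [Real.log_div one_ne_zero (ne_of_gt ht1), Real.log_one, Real.log_inv]
      ring
    rw [← hcalc]
    exact hmono
  -- the lower bound tends to infinity
  have htends : Tendsto (fun t => c * Real.log (1 - t)⁻¹) (nhdsWithin 1 (Iio 1)) atTop := by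
    have h1 : Tendsto (fun t : ℝ => 1 - t) (nhdsWithin 1 (Iio 1)) (nhdsWithin 0 (Ioi 0)) := by
      apply tendsto_nhdsWithin_of_tendsto_nhds_of_eventually_within
      · have h : Tendsto (fun t : ℝ => 1 - t) (nhds 1) (nhds 0) := by
          have hcont : Continuous (fun t : ℝ => 1 - t) := by fun_prop
          have := hcont.tendsto (1:ℝ)
          simpa using this
        exact h.mono_left nhdsWithin_le_nhds
      · exact eventually_nhdsWithin_of_forall fun x hx => by
          simp only [mem_Ioi]; exact sub_pos.2 hx
    have h2 : Tendsto (fun t : ℝ => Real.log (1 - t)) (nhdsWithin 1 (Iio 1)) atBot :=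
      Real.tendsto_log_nhdsGT_zero.comp h1
    have h3 : Tendsto (fun t : ℝ => Real.log (1 - t)⁻¹) (nhdsWithin 1 (Iio 1)) atTop := by
      have : (fun t : ℝ => Real.log (1 - t)⁻¹) = fun t => - Real.log (1 - t) := by
        funext t; rw [Real.log_inv]
      rw [this]
      exact tendsto_neg_atBot_atTop.comp h2
    exact h3.const_mul_atTop hc0
  apply tendsto_atTop_mono' _ _ htends
  filter_upwards [inter_mem_nhdsWithin (Iio 1) (Ioi_mem_nhds (by norm_num : (0:ℝ) < 1))] with t ht
  exact hlow t ⟨le_of_lt ht.2, ht.1⟩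



lemma hetFcontAt (hW3 : ContDiff ℝ 3 W) (hWnn : ∀ t : ℝ, 0 ≤ W t)
    (hWzero : ∀ t : ℝ, W t = 0 ↔ t = 1 ∨ t = -1)
    {t : ℝ} (ht : t ∈ Ioo (-1:ℝ) 1) : ContinuousAt (hetF W) t :=
  (hetF_hasDerivAt hW3 hWnn hWzero ht).continuousAt

lemma hetFmono (hW3 : ContDiff ℝ 3 W) (hWnn : ∀ t : ℝ, 0 ≤ W t)
    (hWzero : ∀ t : ℝ, W t = 0 ↔ t = 1 ∨ t = -1) :
    StrictMonoOn (hetF W) (Ioo (-1:ℝ) 1) := by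
  apply strictMonoOn_of_deriv_pos (convex_Ioo _ _)
  · exact fun t ht => (hetFcontAt hW3 hWnn hWzero ht).continuousWithinAt
  · intro t ht
    rw [interior_Ioo] at ht
    rw [(hetF_hasDerivAt hW3 hWnn hWzero ht).deriv]
    exact hetGpos hWnn hWzero ht

lemma hetFbot (hW3 : ContDiff ℝ 3 W) (heven : ∀ t : ℝ, W (-t) = W t)
    (hWnn : ∀ t : ℝ, 0 ≤ W t)
    (hWzero : ∀ t : ℝ, W t = 0 ↔ t = 1 ∨ t = -1) :
    Tendsto (hetF W) (nhdsWithin (-1) (Ioi (-1))) atBot := by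
  have hneg : Tendsto (fun t : ℝ => -t) (nhdsWithin (-1:ℝ) (Ioi (-1)))
      (nhdsWithin 1 (Iio 1)) := by
    apply tendsto_nhdsWithin_of_tendsto_nhds_of_eventually_within
    · have : Tendsto (fun t : ℝ => -t) (nhds (-1:ℝ)) (nhds 1) := by
        have := continuous_neg.tendsto (-1:ℝ)
        simpa using this
      exact this.mono_left nhdsWithin_le_nhds
    · exact eventually_nhdsWithin_of_forall fun x hx => by
        simp only [mem_Iio]; simpa using neg_lt_neg (mem_Ioi.1 hx)
  have h1 : Tendsto (fun t : ℝ => hetF W (-t)) (nhdsWithin (-1:ℝ) (Ioi (-1))) atTop :=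
    (hetFtop hW3 hWnn hWzero).comp hneg
  have h2 : Tendsto (fun t : ℝ => -(hetF W (-t))) (nhdsWithin (-1:ℝ) (Ioi (-1))) atBot :=
    tendsto_neg_atTop_atBot.comp h1
  convert h2 using 1
  funext t
  rw [hetFodd heven t]
  simp

lemma hetFsurj (hW3 : ContDiff ℝ 3 W) (heven : ∀ t : ℝ, W (-t) = W t)
    (hWnn : ∀ t : ℝ, 0 ≤ W t)
    (hWzero : ∀ t : ℝ, W t = 0 ↔ t = 1 ∨ t = -1) (z : ℝ) :
    ∃ t ∈ Ioo (-1:ℝ) 1, hetF W t = z := by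
  have hIoo1 : Ioo (-1:ℝ) 1 ∈ nhdsWithin 1 (Iio 1) := by
    apply mem_nhdsWithin.2
    exact ⟨Ioi (-1), isOpen_Ioi, by norm_num, fun x hx => ⟨hx.1, hx.2⟩⟩
  have hIoo2 : Ioo (-1:ℝ) 1 ∈ nhdsWithin (-1:ℝ) (Ioi (-1)) := by
    apply mem_nhdsWithin.2
    exact ⟨Iio 1, isOpen_Iio, by norm_num, fun x hx => ⟨hx.2, hx.1⟩⟩
  obtain ⟨t₂, ht₂z, ht₂⟩ :=
    (((hetFtop hW3 hWnn hWzero).eventually_gt_atTop z).and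
      (hIoo1 : ∀ᶠ t in _, t ∈ Ioo (-1:ℝ) 1)).exists
  obtain ⟨t₁, ht₁z, ht₁⟩ :=
    (((hetFbot hW3 heven hWnn hWzero).eventually_lt_atBot z).and
      (hIoo2 : ∀ᶠ t in _, t ∈ Ioo (-1:ℝ) 1)).exists
  have ht12 : t₁ ≤ t₂ := by
    by_contra h
    push_neg at h
    have := (hetFmono hW3 hWnn hWzero) ht₂ ht₁ h
    linarith
  have hcont : ContinuousOn (hetF W) (Icc t₁ t₂) := fun x hx =>
    (hetFcontAt hW3 hWnn hWzero ⟨lt_of_lt_of_le ht₁.1 hx.1, lt_of_le_of_lt hx.2 ht₂.2⟩).continuousWithinAt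
  have hz : z ∈ Icc (hetF W t₁) (hetF W t₂) := ⟨le_of_lt ht₁z, le_of_lt ht₂z⟩
  obtain ⟨t, htm, htz⟩ := intermediate_value_Icc ht12 hcont hz
  exact ⟨t, ⟨lt_of_lt_of_le ht₁.1 htm.1, lt_of_le_of_lt htm.2 ht₂.2⟩, htz⟩

end aux

theorem existence_of_heteroclinic (W : ℝ → ℝ)
    (hW3 : ContDiff ℝ 3 W)
    (heven : ∀ t : ℝ, W (-t) = W t)
    (hWnn : ∀ t : ℝ, 0 ≤ W t)
    (hWzero : ∀ t : ℝ, W t = 0 ↔ t = 1 ∨ t = -1)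
    (hW''1 : 0 < deriv (deriv W) 1)
    (hW''neg1 : 0 < deriv (deriv W) (-1))
    (hW''0 : deriv (deriv W) 0 < 0)
    (hW'neg : ∀ t ∈ Ioo (0 : ℝ) 1, deriv W t < 0) :
    ∃ ψ : ℝ → ℝ, ContDiff ℝ 2 ψ ∧ StrictMono ψ ∧ ψ 0 = 0 ∧
      (∀ z : ℝ, -1 < ψ z ∧ ψ z < 1) ∧
      (∀ z : ℝ, deriv (deriv ψ) z = deriv W (ψ z)) ∧
      (∀ z : ℝ, (deriv ψ z) ^ 2 = 2 * W (ψ z)) ∧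
      Tendsto ψ atTop (nhds 1) ∧ Tendsto ψ atBot (nhds (-1)) := by
  have hsurj := hetFsurj hW3 heven hWnn hWzero
  set ψ : ℝ → ℝ := fun z => (hsurj z).choose with hψdef
  have hmem : ∀ z, ψ z ∈ Ioo (-1:ℝ) 1 := fun z => (hsurj z).choose_spec.1
  have hFψ : ∀ z, hetF W (ψ z) = z := fun z => (hsurj z).choose_spec.2
  have hFmono := hetFmono hW3 hWnn hWzero
  have h0mem : (0:ℝ) ∈ Ioo (-1:ℝ) 1 := by norm_num
  have hinj := hFmono.injOn
  have hleft : ∀ t ∈ Ioo (-1:ℝ) 1, ψ (hetF W t) = t := by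
    intro t ht
    exact hinj (hmem _) ht (hFψ (hetF W t))
  have hF0 : hetF W 0 = 0 := intervalIntegral.integral_same
  have hψ0 : ψ 0 = 0 := by
    have := hleft 0 h0mem
    rwa [hF0] at this
  have hψmono : StrictMono ψ := by
    intro z₁ z₂ hz
    rcases lt_trichotomy (ψ z₁) (ψ z₂) with h | h | h
    · exact h
    · exfalso; have := congrArg (hetF W) h; rw [hFψ, hFψ] at this; exact absurd this (ne_of_lt hz)
    · exfalso
      have := hFmono (hmem z₂) (hmem z₁) h
      rw [hFψ, hFψ] at this
      exact absurd hz (not_lt.2 (le_of_lt this))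
  have hψcont : ∀ a, ContinuousAt ψ a := by
    intro a
    rw [ContinuousAt, tendsto_order]
    constructor
    · intro b hb
      set t₁ : ℝ := max b ((ψ a - 1) / 2) with ht₁def
      have hm1 : -1 < (ψ a - 1) / 2 := by have := (hmem a).1; linarith
      have hm2 : (ψ a - 1) / 2 < ψ a := by have := (hmem a).1; linarith
      have ht₁mem : t₁ ∈ Ioo (-1:ℝ) 1 := by
        constructor
        · exact lt_of_lt_of_le hm1 (le_max_right _ _)
        · exact lt_trans (max_lt hb hm2) (hmem a).2
      have hFt₁ : hetF W t₁ < a := by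
        have := hFmono ht₁mem (hmem a) (max_lt hb hm2)
        rwa [hFψ] at this
      filter_upwards [Ioi_mem_nhds hFt₁] with z hz
      have : t₁ < ψ z := by
        by_contra h
        push_neg at h
        have := hFmono.monotoneOn (hmem z) ht₁mem h
        rw [hFψ] at this
        exact absurd (lt_of_lt_of_le hz this) (lt_irrefl _)
      exact lt_of_le_of_lt (le_max_left _ _) this
    · intro b hb
      set t₂ : ℝ := min b ((ψ a + 1) / 2) with ht₂def
      have hm1 : (ψ a + 1) / 2 < 1 := by have := (hmem a).2; linarith
      have hm2 : ψ a < (ψ a + 1) / 2 := by have := (hmem a).2; linarith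
      have ht₂mem : t₂ ∈ Ioo (-1:ℝ) 1 := by
        constructor
        · exact lt_trans (hmem a).1 (lt_min hb hm2)
        · exact lt_of_le_of_lt (min_le_right _ _) hm1
      have hFt₂ : a < hetF W t₂ := by
        have := hFmono (hmem a) ht₂mem (lt_min hb hm2)
        rwa [hFψ] at this
      filter_upwards [Iio_mem_nhds hFt₂] with z hz
      have : ψ z < t₂ := by
        by_contra h
        push_neg at h
        have := hFmono.monotoneOn ht₂mem (hmem z) h
        rw [hFψ] at this
        exact absurd (lt_of_le_of_lt this hz) (lt_irrefl _)
      exact lt_of_lt_of_le this (min_le_left _ _)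
  -- derivative of ψ
  have hψderiv : ∀ z, HasDerivAt ψ (Real.sqrt (2 * W (ψ z))) z := by
    intro z
    have h := HasDerivAt.of_local_left_inverse (hψcont z)
      (hetF_hasDerivAt hW3 hWnn hWzero (hmem z))
      (ne_of_gt (hetGpos hWnn hWzero (hmem z)))
      (Eventually.of_forall hFψ)
    simpa [hetG, inv_inv] using h
  have hψdiff : Differentiable ℝ ψ := fun z => (hψderiv z).differentiableAt
  have hψ'eq : deriv ψ = fun z => Real.sqrt (2 * W (ψ z)) :=
    funext fun z => (hψderiv z).deriv
  have hWd : Differentiable ℝ W := hW3.differentiable (by norm_num)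
  -- second derivative
  have hψ'' : ∀ z, HasDerivAt (deriv ψ) (deriv W (ψ z)) z := by
    intro z
    rw [hψ'eq]
    have hpos : 0 < 2 * W (ψ z) := by
      have := hetWpos hWnn hWzero (hmem z); linarith
    have hsqpos : 0 < Real.sqrt (2 * W (ψ z)) := Real.sqrt_pos.2 hpos
    have hinner : HasDerivAt (fun y => 2 * W (ψ y))
        (2 * (deriv W (ψ z) * Real.sqrt (2 * W (ψ z)))) z := by
      have h1 : HasDerivAt (fun y => W (ψ y)) (deriv W (ψ z) * Real.sqrt (2 * W (ψ z))) z :=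
        ((hWd (ψ z)).hasDerivAt).comp z (hψderiv z)
      simpa using h1.const_mul 2
    have houter := Real.hasDerivAt_sqrt (ne_of_gt hpos)
    have h := houter.comp z hinner
    have key : 1 / (2 * Real.sqrt (2 * W (ψ z))) * (2 * (deriv W (ψ z) * Real.sqrt (2 * W (ψ z))))
        = deriv W (ψ z) := by
      rw [one_div, inv_mul_eq_div,
        div_eq_iff (ne_of_gt (by positivity : (0:ℝ) < 2 * Real.sqrt (2 * W (ψ z))))]
      ring
    rw [key] at h
    exact h
  have hd2 : ∀ z, deriv (deriv ψ) z = deriv W (ψ z) := fun z => (hψ'' z).deriv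
  -- smoothness
  have hWc' : Continuous (deriv W) := by
    have h3 : ContDiff ℝ ((2:ℕ) + 1) W := by exact_mod_cast hW3
    exact (((contDiff_succ_iff_deriv).1 h3).2.2).continuous
  have hψc : Continuous ψ := continuous_iff_continuousAt.2 hψcont
  have hsmooth : ContDiff ℝ 2 ψ := by
    have h2 : ContDiff ℝ ((1:ℕ) + 1) ψ := by
      rw [contDiff_succ_iff_deriv]
      refine ⟨hψdiff, by simp, ?_⟩
      have h1 : ContDiff ℝ 1 (deriv ψ) := by
        rw [contDiff_one_iff_deriv]
        refine ⟨fun z => (hψ'' z).differentiableAt, ?_⟩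
        have : deriv (deriv ψ) = fun z => deriv W (ψ z) := funext hd2
        rw [this]
        exact hWc'.comp hψc
      exact_mod_cast h1
    exact_mod_cast h2
  -- limits
  have hrange : range ψ = Ioo (-1:ℝ) 1 := by
    ext t
    constructor
    · rintro ⟨z, rfl⟩; exact hmem z
    · intro ht; exact ⟨hetF W t, hleft t ht⟩
  have htop : Tendsto ψ atTop (nhds 1) := by
    have hbdd : BddAbove (range ψ) := ⟨1, fun x hx => by rw [hrange] at hx; exact le_of_lt hx.2⟩
    have := tendsto_atTop_ciSup hψmono.monotone hbdd
    have hsup : (⨆ z, ψ z) = 1 := by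
      rw [iSup, hrange, csSup_Ioo (by norm_num : (-1:ℝ) < 1)]
    rwa [hsup] at this
  have hbot : Tendsto ψ atBot (nhds (-1)) := by
    have hbdd : BddBelow (range ψ) := ⟨-1, fun x hx => by rw [hrange] at hx; exact le_of_lt hx.1⟩
    have := tendsto_atBot_ciInf hψmono.monotone hbdd
    have hinf : (⨅ z, ψ z) = -1 := by
      rw [iInf, hrange, csInf_Ioo (by norm_num : (-1:ℝ) < 1)]
    rwa [hinf] at this
  refine ⟨ψ, hsmooth, hψmono, hψ0, fun z => ⟨(hmem z).1, (hmem z).2⟩, hd2, ?_, htop, hbot⟩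
  intro z
  rw [hψ'eq]
  exact Real.sq_sqrt (by have := hetWpos hWnn hWzero (hmem z); linarith)
end

section
/- (Spectral gap on the orthogonal complement of the translation mode) There exists a constant μ > 0 such that for every continuously differentiable, compactly supported function w : ℝ → ℝ satisfying the orthogonality condition ∫_ℝ w(z)·sech²(z/√2) dz = 0, one has ∫_ℝ ( w'(z)² + (3·tanh²(z/√2) − 1)·w(z)² ) dz ≥ μ·∫_ℝ w(z)² dz. -/
open MeasureTheory Real Filter Set Topology

noncomputable section

namespace SpectralGapAux


/-- `cc z = cosh (z/√2)`. -/
def cc (z : ℝ) : ℝ := Real.cosh (z / Real.sqrt 2)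

/-- `ss z = √2 · sinh (z/√2)`, so that `ss' = cc` and `cc' = ss/2`. -/
def ss (z : ℝ) : ℝ := Real.sqrt 2 * Real.sinh (z / Real.sqrt 2)

lemma sqrt2_pos : (0:ℝ) < Real.sqrt 2 := Real.sqrt_pos.2 (by norm_num)

lemma sqrt2_mul_self : Real.sqrt 2 * Real.sqrt 2 = 2 := Real.mul_self_sqrt (by norm_num)

lemma cc_pos (z : ℝ) : 0 < cc z := Real.cosh_pos _

lemma one_le_cc (z : ℝ) : 1 ≤ cc z := Real.one_le_cosh _

lemma cc_ne (z : ℝ) : cc z ≠ 0 := (cc_pos z).ne'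

lemma cc_zero : cc 0 = 1 := by simp [cc]

lemma ss_zero : ss 0 = 0 := by simp [ss]

lemma ss_ne {z : ℝ} (hz : z ≠ 0) : ss z ≠ 0 :=
  mul_ne_zero sqrt2_pos.ne' (Real.sinh_ne_zero.2 (div_ne_zero hz sqrt2_pos.ne'))

lemma self_le_ss {z : ℝ} (hz : 0 ≤ z) : z ≤ ss z := by
  have h1 : z / Real.sqrt 2 ≤ Real.sinh (z / Real.sqrt 2) :=
    Real.self_le_sinh_iff.2 (div_nonneg hz sqrt2_pos.le)
  have h2 : Real.sqrt 2 * (z / Real.sqrt 2) ≤ Real.sqrt 2 * Real.sinh (z / Real.sqrt 2) :=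
    mul_le_mul_of_nonneg_left h1 sqrt2_pos.le
  have h3 : Real.sqrt 2 * (z / Real.sqrt 2) = z := by
    field_simp
  rw [h3] at h2; exact h2

lemma ss_neg_eq (z : ℝ) : ss (-z) = - ss z := by
  simp [ss, neg_div, Real.sinh_neg]

lemma ss_le_self {z : ℝ} (hz : z ≤ 0) : ss z ≤ z := by
  have := self_le_ss (neg_nonneg.2 hz)
  rw [ss_neg_eq] at this; linarith

lemma ss_nonneg {z : ℝ} (hz : 0 ≤ z) : 0 ≤ ss z := le_trans hz (self_le_ss hz)

lemma ss_nonpos {z : ℝ} (hz : z ≤ 0) : ss z ≤ 0 := le_trans (ss_le_self hz) hz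

lemma abs_le_abs_ss (z : ℝ) : |z| ≤ |ss z| := by
  rcases le_total 0 z with h | h
  · rw [abs_of_nonneg h, abs_of_nonneg (ss_nonneg h)]; exact self_le_ss h
  · rw [abs_of_nonpos h, abs_of_nonpos (ss_nonpos h)]; have := ss_le_self h; linarith

lemma hasDerivAt_cc (z : ℝ) : HasDerivAt cc (ss z / 2) z := by
  have h := (Real.hasDerivAt_cosh (z / Real.sqrt 2)).comp z
    ((hasDerivAt_id z).div_const (Real.sqrt 2))
  have h' : HasDerivAt cc _ z := h
  convert h' using 1
  show ss z / 2 = Real.sinh (z / Real.sqrt 2) * (1 / Real.sqrt 2)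
  rw [ss]
  field_simp
  linear_combination Real.sinh (z / Real.sqrt 2) * sqrt2_mul_self

lemma hasDerivAt_ss (z : ℝ) : HasDerivAt ss (cc z) z := by
  have h := ((Real.hasDerivAt_sinh (z / Real.sqrt 2)).comp z
    ((hasDerivAt_id z).div_const (Real.sqrt 2))).const_mul (Real.sqrt 2)
  have h' : HasDerivAt ss _ z := h
  convert h' using 1
  show cc z = Real.sqrt 2 * (Real.cosh (z / Real.sqrt 2) * (1 / Real.sqrt 2))
  rw [cc]
  field_simp

lemma continuous_cc : Continuous cc :=
  Real.continuous_cosh.comp (continuous_id.div_const _)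

lemma continuous_ss : Continuous ss :=
  continuous_const.mul (Real.continuous_sinh.comp (continuous_id.div_const _))

lemma tanh_sq (z : ℝ) : Real.tanh (z / Real.sqrt 2) ^ 2 = ss z ^ 2 / (2 * cc z ^ 2) := by
  have h : ss z ^ 2 = 2 * Real.sinh (z / Real.sqrt 2) ^ 2 := by
    rw [ss, mul_pow, show Real.sqrt 2 ^ 2 = 2 from Real.sq_sqrt (by norm_num)]
  rw [Real.tanh_eq_sinh_div_cosh, div_pow, h, cc, mul_div_mul_left _ _ (two_ne_zero)]

lemma one_add_quarter_sq_le_cc (z : ℝ) : 1 + z ^ 2 / 4 ≤ cc z := by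
  have h1 : cc z = 1 + 2 * Real.sinh (z / (2 * Real.sqrt 2)) ^ 2 := by
    have := Real.cosh_two_mul (z / (2 * Real.sqrt 2))
    have harg : 2 * (z / (2 * Real.sqrt 2)) = z / Real.sqrt 2 := by ring
    rw [harg] at this
    rw [cc, this, Real.cosh_sq]
    ring
  have h2 : |z / (2 * Real.sqrt 2)| ≤ |Real.sinh (z / (2 * Real.sqrt 2))| := by
    rcases le_total 0 (z / (2 * Real.sqrt 2)) with h | h
    · rw [abs_of_nonneg h, abs_of_nonneg (le_trans h (Real.self_le_sinh_iff.2 h))]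
      exact Real.self_le_sinh_iff.2 h
    · have h' : Real.sinh (z / (2 * Real.sqrt 2)) ≤ z / (2 * Real.sqrt 2) :=
        Real.sinh_le_self_iff.2 h
      rw [abs_of_nonpos h, abs_of_nonpos (le_trans h' h)]; linarith
  have h3 : (z / (2 * Real.sqrt 2)) ^ 2 ≤ Real.sinh (z / (2 * Real.sqrt 2)) ^ 2 := by
    rw [← sq_abs, ← sq_abs (Real.sinh _)]
    exact pow_le_pow_left₀ (abs_nonneg _) h2 2
  have h4 : (z / (2 * Real.sqrt 2)) ^ 2 = z ^ 2 / 8 := by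
    rw [div_pow, mul_pow]
    rw [show Real.sqrt 2 ^ 2 = 2 from Real.sq_sqrt (by norm_num)]
    norm_num
  nlinarith [h3]

lemma inv_cc_pow_le {n : ℕ} (hn : 1 ≤ n) (z : ℝ) : (cc z ^ n)⁻¹ ≤ 4 * (1 + z ^ 2)⁻¹ := by
  have h0 : (1:ℝ) ≤ cc z := one_le_cc z
  have h1 : cc z ^ 1 ≤ cc z ^ n := pow_le_pow_right₀ h0 hn
  have h2 : (cc z ^ n)⁻¹ ≤ (cc z)⁻¹ := by
    rw [← pow_one (cc z)] 
    exact inv_anti₀ (by positivity) (by simpa using h1)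
  have h3 : (cc z)⁻¹ ≤ (1 + z ^ 2 / 4)⁻¹ :=
    inv_anti₀ (by positivity) (one_add_quarter_sq_le_cc z)
  have h4 : (1 + z ^ 2 / 4)⁻¹ ≤ 4 * (1 + z ^ 2)⁻¹ := by
    rw [← one_div, ← one_div, mul_one_div]
    rw [div_le_div_iff₀ (by positivity) (by positivity)]
    nlinarith [sq_nonneg z]
  linarith

lemma integrable_inv_cc_pow {n : ℕ} (hn : 1 ≤ n) :
    Integrable (fun z : ℝ => (cc z ^ n)⁻¹) := by
  refine Integrable.mono' (integrable_inv_one_add_sq.const_mul 4) ?_ ?_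
  · exact ((continuous_cc.pow n).inv₀ (fun z => pow_ne_zero _ (cc_ne z))).aestronglyMeasurable
  · refine Filter.Eventually.of_forall (fun z => ?_)
    rw [Real.norm_eq_abs, abs_of_nonneg (inv_nonneg.2 (pow_nonneg (cc_pos z).le n))]
    exact inv_cc_pow_le hn z

lemma ss_sq_le (z : ℝ) : ss z ^ 2 ≤ 2 * cc z ^ 2 := by
  have h1 : ss z ^ 2 = 2 * Real.sinh (z / Real.sqrt 2) ^ 2 := by
    rw [ss, mul_pow, Real.sq_sqrt (by norm_num : (0:ℝ) ≤ 2)]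
  have h2 : cc z ^ 2 = Real.sinh (z / Real.sqrt 2) ^ 2 + 1 := Real.cosh_sq _
  rw [h1, h2]; nlinarith

lemma sq_le_ss_sq (z : ℝ) : z ^ 2 ≤ ss z ^ 2 := by
  rw [← sq_abs z, ← sq_abs (ss z)]
  exact pow_le_pow_left₀ (abs_nonneg _) (abs_le_abs_ss z) 2

variable (w : ℝ → ℝ)

def gg (z : ℝ) : ℝ := w z * cc z ^ 2
def gd (z : ℝ) : ℝ := deriv w z * cc z ^ 2 + w z * cc z * ss z
def hh (z : ℝ) : ℝ := gg w z - w 0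
def GG (z : ℝ) : ℝ := -(ss z * gg w z ^ 2 / cc z ^ 5) + hh w z ^ 2 / (cc z ^ 3 * ss z)
def PP (z : ℝ) : ℝ := deriv w z ^ 2 + (3 * Real.tanh (z / Real.sqrt 2) ^ 2 - 1) * w z ^ 2
def TT (z : ℝ) : ℝ := 3 / 2 * hh w z ^ 2 / cc z ^ 4
def RR (z : ℝ) : ℝ := (gd w z - cc z * hh w z / ss z) ^ 2 / cc z ^ 4
def EE (z : ℝ) : ℝ := PP w z - TT w z - RR w z


variable {w}
lemma hasDerivAt_gg (hw : ContDiff ℝ 1 w) (z : ℝ) : HasDerivAt (gg w) (gd w z) z := by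
  have hwz : HasDerivAt w (deriv w z) z :=
    ((hw.differentiable one_ne_zero) z).hasDerivAt
  have h := hwz.mul ((hasDerivAt_cc z).pow 2)
  have h' : HasDerivAt (gg w) _ z := h
  convert h' using 1
  unfold gd
  push_cast [Pi.pow_apply]
  ring

lemma hasDerivAt_hh (hw : ContDiff ℝ 1 w) (z : ℝ) : HasDerivAt (hh w) (gd w z) z :=
  (hasDerivAt_gg hw z).sub_const _

lemma hasDerivAt_GG (hw : ContDiff ℝ 1 w) {z : ℝ} (hz : z ≠ 0) :
    HasDerivAt (GG w) (EE w z) z := by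
  have hc := hasDerivAt_cc z
  have hs := hasDerivAt_ss z
  have hg := hasDerivAt_gg hw z
  have hhd := hasDerivAt_hh hw z
  have hden1 : HasDerivAt (fun x => cc x ^ 5) ((5 : ℕ) * cc z ^ 4 * (ss z / 2)) z := by
    exact hc.pow 5
  have hnum1 : HasDerivAt (fun x => ss x * gg w x ^ 2)
      (cc z * gg w z ^ 2 + ss z * ((2 : ℕ) * gg w z ^ 1 * gd w z)) z :=
    hs.mul (hg.pow 2)
  have hG1 : HasDerivAt (fun x => -(ss x * gg w x ^ 2 / cc x ^ 5))
      (-(((cc z * gg w z ^ 2 + ss z * ((2 : ℕ) * gg w z ^ 1 * gd w z)) * cc z ^ 5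
        - ss z * gg w z ^ 2 * ((5 : ℕ) * cc z ^ 4 * (ss z / 2))) / (cc z ^ 5) ^ 2)) z :=
    (hnum1.div hden1 (pow_ne_zero 5 (cc_ne z))).neg
  have hden2 : HasDerivAt (fun x => cc x ^ 3 * ss x)
      (((3 : ℕ) * cc z ^ 2 * (ss z / 2)) * ss z + cc z ^ 3 * cc z) z :=
    (hc.pow 3).mul hs
  have hnum2 : HasDerivAt (fun x => hh w x ^ 2) ((2 : ℕ) * hh w z ^ 1 * gd w z) z :=
    hhd.pow 2
  have hG2 : HasDerivAt (fun x => hh w x ^ 2 / (cc x ^ 3 * ss x))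
      ((((2 : ℕ) * hh w z ^ 1 * gd w z) * (cc z ^ 3 * ss z)
        - hh w z ^ 2 * (((3 : ℕ) * cc z ^ 2 * (ss z / 2)) * ss z + cc z ^ 3 * cc z))
        / (cc z ^ 3 * ss z) ^ 2) z :=
    hnum2.div hden2 (mul_ne_zero (pow_ne_zero 3 (cc_ne z)) (ss_ne hz))
  have hsum := hG1.add hG2
  have : HasDerivAt (GG w) _ z := hsum
  convert this using 1
  unfold EE PP TT RR
  rw [tanh_sq]
  unfold gd hh gg
  have h1 := cc_ne z
  have h2 := ss_ne hz
  field_simp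
  ring

section Props

variable (hw : ContDiff ℝ 1 w) (hsupp : HasCompactSupport w)
include hw

lemma continuous_gd : Continuous (gd w) :=
  (((hw.continuous_deriv le_rfl).mul (continuous_cc.pow 2)).add
    ((hw.continuous.mul continuous_cc).mul continuous_ss))

lemma continuous_gg' : Continuous (gg w) := hw.continuous.mul (continuous_cc.pow 2)

lemma continuous_hh : Continuous (hh w) := (continuous_gg' hw).sub continuous_const

lemma continuous_TT : Continuous (TT w) :=
  (continuous_const.mul ((continuous_hh hw).pow 2)).div (continuous_cc.pow 4)
    fun z => pow_ne_zero _ (cc_ne z)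

lemma continuous_PP : Continuous (PP w) := by
  have htanh : Continuous fun z : ℝ => Real.tanh (z / Real.sqrt 2) := by
    have heq : (fun z : ℝ => Real.tanh (z / Real.sqrt 2))
        = fun z : ℝ => Real.sinh (z / Real.sqrt 2) / Real.cosh (z / Real.sqrt 2) :=
      funext fun z => Real.tanh_eq_sinh_div_cosh _
    rw [heq]
    exact (Real.continuous_sinh.comp (continuous_id.div_const _)).div
      (Real.continuous_cosh.comp (continuous_id.div_const _))
      fun z => (Real.cosh_pos _).ne'
  exact ((hw.continuous_deriv le_rfl).pow 2).add
    (((continuous_const.mul (htanh.pow 2)).sub continuous_const).mul (hw.continuous.pow 2))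

include hsupp

lemma hcs_gd : HasCompactSupport (gd w) := by
  have h1 : HasCompactSupport (fun z => deriv w z * cc z ^ 2) := hsupp.deriv.mul_right
  have h2 : HasCompactSupport (fun z => w z * cc z * ss z) := hsupp.mul_right.mul_right
  exact h1.add h2

lemma hcs_PP : HasCompactSupport (PP w) := by
  have h1 : HasCompactSupport (fun z => deriv w z ^ 2) := by
    have : (fun z => deriv w z ^ 2) = (fun z => deriv w z * deriv w z) := by
      funext z; ring
    rw [this]; exact hsupp.deriv.mul_right
  have h2 : HasCompactSupport
      (fun z => (3 * Real.tanh (z / Real.sqrt 2) ^ 2 - 1) * w z ^ 2) := by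
    have : (fun z => (3 * Real.tanh (z / Real.sqrt 2) ^ 2 - 1) * w z ^ 2)
        = (fun z => w z * (w z * (3 * Real.tanh (z / Real.sqrt 2) ^ 2 - 1))) := by
      funext z; ring
    rw [this]; exact hsupp.mul_right
  exact h1.add h2

lemma integrable_PP : Integrable (PP w) :=
  (continuous_PP hw).integrable_of_hasCompactSupport (hcs_PP hw hsupp)

lemma integrable_w_sq : Integrable (fun z => w z ^ 2) := by
  have hcs : HasCompactSupport (fun z => w z ^ 2) := by
    have : (fun z => w z ^ 2) = (fun z => w z * w z) := by funext z; ring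
    rw [this]; exact hsupp.mul_right
  exact (hw.continuous.pow 2).integrable_of_hasCompactSupport hcs

lemma integrable_orth : Integrable (fun z => w z * (1 / Real.cosh (z / Real.sqrt 2)) ^ 2) :=
  (hw.continuous.mul ((continuous_const.div (Real.continuous_cosh.comp
    (continuous_id.div_const _)) fun z => (Real.cosh_pos _).ne').pow 2)
    ).integrable_of_hasCompactSupport hsupp.mul_right

lemma integrable_TT : Integrable (TT w) := by
  have hbound : Integrable (fun z => 3 * w z ^ 2 + 3 * w 0 ^ 2 * (cc z ^ 4)⁻¹) :=
    ((integrable_w_sq hw hsupp).const_mul 3).add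
      ((integrable_inv_cc_pow (by norm_num : 1 ≤ 4)).const_mul (3 * w 0 ^ 2))
  refine hbound.mono' (continuous_TT hw).aestronglyMeasurable ?_
  refine Filter.Eventually.of_forall fun z => ?_
  have hcc : (0:ℝ) < cc z ^ 4 := pow_pos (cc_pos z) 4
  simp only [TT, Real.norm_eq_abs]
  rw [abs_of_nonneg (div_nonneg (by positivity) hcc.le), div_le_iff₀ hcc]
  have h3 : 3 * w 0 ^ 2 * (cc z ^ 4)⁻¹ * cc z ^ 4 = 3 * w 0 ^ 2 := by
    rw [mul_assoc, inv_mul_cancel₀ hcc.ne', mul_one]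
  have hexp : hh w z = w z * cc z ^ 2 - w 0 := rfl
  rw [hexp]
  nlinarith [sq_nonneg (w z * cc z ^ 2 + w 0), h3]

end Props

section Props

variable (hw : ContDiff ℝ 1 w) (hsupp : HasCompactSupport w)

omit hw hsupp in
lemma hh_zero : hh w 0 = 0 := by simp [hh, gg, cc_zero]

omit hw hsupp in
lemma GG_zero : GG w 0 = 0 := by simp [GG, ss_zero]

include hw hsupp in
lemma exists_lip : ∃ L : ℝ, 0 ≤ L ∧ (∀ z, |gd w z| ≤ L) ∧ ∀ z, |hh w z| ≤ L * |z| := by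
  have hev : ∀ᶠ x in cocompact ℝ, |gd w x| ≤ |gd w 0| := by
    have h0 := hcs_gd hw hsupp
    rw [hasCompactSupport_iff_eventuallyEq, Filter.coclosedCompact_eq_cocompact] at h0
    filter_upwards [h0] with x hx
    rw [hx]
    simp [abs_nonneg]
  obtain ⟨x₀, hx₀⟩ := ((continuous_gd hw).abs).exists_forall_ge' 0 hev
  refine ⟨|gd w x₀|, abs_nonneg _, hx₀, fun z => ?_⟩
  have hmvt := convex_univ.norm_image_sub_le_of_norm_hasDerivWithin_le
    (f := hh w) (f' := gd w) (C := |gd w x₀|)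
    (fun x _ => (hasDerivAt_hh hw x).hasDerivWithinAt)
    (fun x _ => by simpa using hx₀ x) (mem_univ 0) (mem_univ z)
  rw [hh_zero, sub_zero, sub_zero] at hmvt
  simpa using hmvt

omit hw hsupp in
lemma RR_nonneg (z : ℝ) : 0 ≤ RR w z :=
  div_nonneg (sq_nonneg _) (pow_pos (cc_pos z) 4).le

omit hw hsupp in
lemma RR_le {L : ℝ} (hL : 0 ≤ L) (hhh : ∀ z, |hh w z| ≤ L * |z|)
    {z : ℝ} (hz : z ≠ 0) :
    RR w z ≤ 4 * deriv w z ^ 2 + 8 * w z ^ 2 + 2 * L ^ 2 * (cc z ^ 2)⁻¹ := by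
  have hc := cc_pos z
  have hsne := ss_ne hz
  have hs2 : (0:ℝ) < ss z ^ 2 := by positivity
  have hcc4 : (0:ℝ) < cc z ^ 4 := pow_pos hc 4
  have hhsq : hh w z ^ 2 ≤ L ^ 2 * z ^ 2 := by
    calc hh w z ^ 2 = |hh w z| ^ 2 := (sq_abs _).symm
      _ ≤ (L * |z|) ^ 2 := pow_le_pow_left₀ (abs_nonneg _) (hhh z) 2
      _ = L ^ 2 * z ^ 2 := by rw [mul_pow, sq_abs]
  have hq : cc z * hh w z / ss z * ss z = cc z * hh w z := div_mul_cancel₀ _ hsne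
  have hqsq : (cc z * hh w z / ss z) ^ 2 * ss z ^ 2 = cc z ^ 2 * hh w z ^ 2 := by
    have := congrArg (· ^ 2) hq
    simpa [mul_pow] using this
  have hq2 : (cc z * hh w z / ss z) ^ 2 ≤ L ^ 2 * cc z ^ 2 := by
    refine le_of_mul_le_mul_right ?_ hs2
    rw [hqsq]
    calc cc z ^ 2 * hh w z ^ 2 ≤ cc z ^ 2 * (L ^ 2 * z ^ 2) :=
          mul_le_mul_of_nonneg_left hhsq (sq_nonneg _)
      _ ≤ cc z ^ 2 * (L ^ 2 * ss z ^ 2) := by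
          refine mul_le_mul_of_nonneg_left ?_ (sq_nonneg _)
          exact mul_le_mul_of_nonneg_left (sq_le_ss_sq z) (by positivity)
      _ = L ^ 2 * cc z ^ 2 * ss z ^ 2 := by ring
  have hgd2 : gd w z ^ 2 ≤ 2 * deriv w z ^ 2 * cc z ^ 4 + 4 * w z ^ 2 * cc z ^ 4 := by
    have h1 : (0:ℝ) ≤ (w z * cc z) ^ 2 * (2 * cc z ^ 2 - ss z ^ 2) :=
      mul_nonneg (sq_nonneg _) (sub_nonneg.2 (ss_sq_le z))
    have h2 := sq_nonneg (deriv w z * cc z ^ 2 - w z * cc z * ss z)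
    unfold gd
    nlinarith
  have hfin : (gd w z - cc z * hh w z / ss z) ^ 2
      ≤ 4 * deriv w z ^ 2 * cc z ^ 4 + 8 * w z ^ 2 * cc z ^ 4 + 2 * L ^ 2 * cc z ^ 2 := by
    nlinarith [sq_nonneg (gd w z + cc z * hh w z / ss z), hgd2, hq2]
  have hexp : (4 * deriv w z ^ 2 + 8 * w z ^ 2 + 2 * L ^ 2 * (cc z ^ 2)⁻¹) * cc z ^ 4
      = 4 * deriv w z ^ 2 * cc z ^ 4 + 8 * w z ^ 2 * cc z ^ 4 + 2 * L ^ 2 * cc z ^ 2 := by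
    field_simp
  rw [RR, div_le_iff₀ hcc4, hexp]
  exact hfin

include hw hsupp in
lemma integrable_dw_sq : Integrable (fun z => deriv w z ^ 2) := by
  have hcs : HasCompactSupport (fun z => deriv w z ^ 2) := by
    have : (fun z => deriv w z ^ 2) = fun z => deriv w z * deriv w z := by funext z; ring
    rw [this]; exact hsupp.deriv.mul_right
  exact ((hw.continuous_deriv le_rfl).pow 2).integrable_of_hasCompactSupport hcs

include hw hsupp in
lemma integrable_w_sq' : Integrable (fun z => w z ^ 2) := by
  have hcs : HasCompactSupport (fun z => w z ^ 2) := by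
    have : (fun z => w z ^ 2) = fun z => w z * w z := by funext z; ring
    rw [this]; exact hsupp.mul_right
  exact (hw.continuous.pow 2).integrable_of_hasCompactSupport hcs

include hw hsupp in
lemma integrableOn_RR_Ioi : IntegrableOn (RR w) (Ioi 0) := by
  obtain ⟨L, hL, _, hhh⟩ := exists_lip hw hsupp
  have hbound : Integrable (fun z => 4 * deriv w z ^ 2 + 8 * w z ^ 2
      + 2 * L ^ 2 * (cc z ^ 2)⁻¹) :=
    (((integrable_dw_sq hw hsupp).const_mul 4).add
      ((integrable_w_sq' hw hsupp).const_mul 8)).add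
      ((integrable_inv_cc_pow (by norm_num : 1 ≤ 2)).const_mul (2 * L ^ 2))
  refine Integrable.mono' hbound.restrict ?_ ?_
  · refine ContinuousOn.aestronglyMeasurable ?_ measurableSet_Ioi
    refine ContinuousOn.div ?_ ((continuous_cc.pow 4).continuousOn)
      fun x _ => pow_ne_zero _ (cc_ne x)
    refine ContinuousOn.pow ?_ 2
    refine ((continuous_gd hw).continuousOn).sub ?_
    exact ((continuous_cc.mul (continuous_hh hw)).continuousOn).div
      continuous_ss.continuousOn fun x hx => ss_ne (ne_of_gt hx)
  · rw [ae_restrict_iff' measurableSet_Ioi]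
    refine Filter.Eventually.of_forall fun z hz => ?_
    rw [Real.norm_eq_abs, abs_of_nonneg (RR_nonneg z)]
    exact RR_le hL hhh (ne_of_gt hz)

include hw hsupp in
lemma integrableOn_RR_Iic : IntegrableOn (RR w) (Iic 0) := by
  rw [integrableOn_Iic_iff_integrableOn_Iio]
  obtain ⟨L, hL, _, hhh⟩ := exists_lip hw hsupp
  have hbound : Integrable (fun z => 4 * deriv w z ^ 2 + 8 * w z ^ 2
      + 2 * L ^ 2 * (cc z ^ 2)⁻¹) :=
    (((integrable_dw_sq hw hsupp).const_mul 4).add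
      ((integrable_w_sq' hw hsupp).const_mul 8)).add
      ((integrable_inv_cc_pow (by norm_num : 1 ≤ 2)).const_mul (2 * L ^ 2))
  refine Integrable.mono' hbound.restrict ?_ ?_
  · refine ContinuousOn.aestronglyMeasurable ?_ measurableSet_Iio
    refine ContinuousOn.div ?_ ((continuous_cc.pow 4).continuousOn)
      fun x _ => pow_ne_zero _ (cc_ne x)
    refine ContinuousOn.pow ?_ 2
    refine ((continuous_gd hw).continuousOn).sub ?_
    exact ((continuous_cc.mul (continuous_hh hw)).continuousOn).div
      continuous_ss.continuousOn fun x hx => ss_ne (ne_of_lt hx)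
  · rw [ae_restrict_iff' measurableSet_Iio]
    refine Filter.Eventually.of_forall fun z hz => ?_
    rw [Real.norm_eq_abs, abs_of_nonneg (RR_nonneg z)]
    exact RR_le hL hhh (ne_of_lt hz)

end Props

section Props

variable (hw : ContDiff ℝ 1 w) (hsupp : HasCompactSupport w)

include hsupp in
lemma exists_N : ∃ N : ℝ, 0 < N ∧ ∀ z : ℝ, N ≤ |z| → w z = 0 := by
  obtain ⟨r, hr⟩ := hsupp.isCompact.isBounded.subset_closedBall 0
  refine ⟨|r| + 1, by positivity, fun z hz => ?_⟩
  by_contra hwz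
  have hz' : z ∈ tsupport w := subset_tsupport w (by simpa [Function.mem_support] using hwz)
  have h2 := hr hz'
  rw [Metric.mem_closedBall, Real.dist_eq, sub_zero] at h2
  have h3 : r ≤ |r| := le_abs_self r
  linarith

include hsupp in
lemma tendsto_GG_atTop : Tendsto (GG w) atTop (𝓝 0) := by
  obtain ⟨N, hN0, hN⟩ := exists_N hsupp
  have hev : ∀ᶠ z in atTop, GG w z = w 0 ^ 2 * (cc z ^ 3 * ss z)⁻¹ := by
    filter_upwards [eventually_ge_atTop N] with z hz
    have hwz : w z = 0 := hN z (by rw [abs_of_nonneg (le_trans hN0.le hz)]; exact hz)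
    simp [GG, gg, hh, hwz, div_eq_mul_inv]
  have h1 : Tendsto (fun z => cc z ^ 3 * ss z) atTop atTop := by
    refine tendsto_atTop_mono' atTop ?_ tendsto_id
    filter_upwards [eventually_ge_atTop (0:ℝ)] with z hz
    have h2 : z ≤ ss z := self_le_ss hz
    have h3 : ss z ≤ cc z ^ 3 * ss z :=
      le_mul_of_one_le_left (ss_nonneg hz) (one_le_pow₀ (one_le_cc z))
    exact le_trans h2 h3
  have h2 : Tendsto (fun z => w 0 ^ 2 * (cc z ^ 3 * ss z)⁻¹) atTop (𝓝 (w 0 ^ 2 * 0)) :=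
    h1.inv_tendsto_atTop.const_mul _
  rw [mul_zero] at h2
  exact Tendsto.congr' (EventuallyEq.symm hev) h2

include hsupp in
lemma tendsto_GG_atBot : Tendsto (GG w) atBot (𝓝 0) := by
  obtain ⟨N, hN0, hN⟩ := exists_N hsupp
  have hev : ∀ᶠ z in atBot, GG w z = w 0 ^ 2 * (cc z ^ 3 * ss z)⁻¹ := by
    filter_upwards [eventually_le_atBot (-N)] with z hz
    have hwz : w z = 0 := hN z (by rw [abs_of_nonpos (by linarith)]; linarith)
    simp [GG, gg, hh, hwz, div_eq_mul_inv]
  have h1 : Tendsto (fun z => -(cc z ^ 3 * ss z)) atBot atTop := by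
    refine tendsto_atTop_mono' atBot ?_ tendsto_neg_atBot_atTop
    filter_upwards [eventually_le_atBot (0:ℝ)] with z hz
    have h2 : ss z ≤ z := ss_le_self hz
    have h3 : cc z ^ 3 * ss z ≤ ss z := by
      nlinarith [ss_nonpos hz, one_le_pow₀ (one_le_cc z) (n := 3)]
    simp only [neg_le_neg_iff]
    exact le_trans h3 h2
  have h0 : Tendsto (fun z => (cc z ^ 3 * ss z)⁻¹) atBot (𝓝 0) := by
    have := h1.inv_tendsto_atTop.neg
    rw [neg_zero] at this
    refine this.congr fun z => ?_
    simp [inv_neg]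
  have h2 : Tendsto (fun z => w 0 ^ 2 * (cc z ^ 3 * ss z)⁻¹) atBot
      (𝓝 (w 0 ^ 2 * 0)) := h0.const_mul _
  rw [mul_zero] at h2
  exact Tendsto.congr' (EventuallyEq.symm hev) h2

include hw hsupp in
lemma cwa_Ici {L : ℝ} (hL : 0 ≤ L) (hhh : ∀ z, |hh w z| ≤ L * |z|) :
    ContinuousWithinAt (GG w) (Ici 0) 0 := by
  have hcont1 : Continuous fun x => -(ss x * gg w x ^ 2 / cc x ^ 5) :=
    ((continuous_ss.mul ((continuous_gg' hw).pow 2)).div (continuous_cc.pow 5)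
      fun z => pow_ne_zero _ (cc_ne z)).neg
  have ht1 : Tendsto (fun x => -(ss x * gg w x ^ 2 / cc x ^ 5)) (nhdsWithin 0 (Ici 0))
      (𝓝 0) := by
    have h2 : Tendsto (fun x => -(ss x * gg w x ^ 2 / cc x ^ 5)) (nhdsWithin 0 (Ici 0))
        (𝓝 (-(ss 0 * gg w 0 ^ 2 / cc 0 ^ 5))) :=
      (hcont1.tendsto 0).mono_left nhdsWithin_le_nhds
    simpa [ss_zero] using h2
  have ht2 : Tendsto (fun x => hh w x ^ 2 / (cc x ^ 3 * ss x)) (nhdsWithin 0 (Ici 0))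
      (𝓝 0) := by
    refine squeeze_zero' (g := fun t => L ^ 2 * t) ?_ ?_ ?_
    · filter_upwards [self_mem_nhdsWithin] with t ht
      exact div_nonneg (sq_nonneg _)
        (mul_nonneg (pow_pos (cc_pos t) 3).le (ss_nonneg ht))
    · filter_upwards [self_mem_nhdsWithin] with t ht
      rcases eq_or_lt_of_le (mem_Ici.1 ht) with h0 | h0
      · rw [← h0]
        simp [hh_zero, ss_zero]
      · have hden : 0 < t := h0
        have hss : 0 < ss t := lt_of_lt_of_le hden (self_le_ss hden.le)
        have hcs : t ≤ cc t ^ 3 * ss t := by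
          have h2 : t ≤ ss t := self_le_ss hden.le
          have h3 : ss t ≤ cc t ^ 3 * ss t :=
            le_mul_of_one_le_left hss.le (one_le_pow₀ (one_le_cc t))
          linarith
        have hnum : hh w t ^ 2 ≤ L ^ 2 * t ^ 2 := by
          calc hh w t ^ 2 = |hh w t| ^ 2 := (sq_abs _).symm
            _ ≤ (L * |t|) ^ 2 := pow_le_pow_left₀ (abs_nonneg _) (hhh t) 2
            _ = L ^ 2 * t ^ 2 := by rw [mul_pow, sq_abs]
        calc hh w t ^ 2 / (cc t ^ 3 * ss t) ≤ L ^ 2 * t ^ 2 / t :=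
              div_le_div₀ (by positivity) hnum hden hcs
          _ = L ^ 2 * t := by
              field_simp
    · have h2 : Tendsto (fun t : ℝ => L ^ 2 * t) (nhdsWithin 0 (Ici 0))
          (𝓝 (L ^ 2 * 0)) :=
        ((continuous_const.mul continuous_id).tendsto (0:ℝ)).mono_left nhdsWithin_le_nhds
      simpa using h2
  have := ht1.add ht2
  rw [add_zero] at this
  unfold ContinuousWithinAt
  rw [GG_zero]
  exact this

end Props

section Props

variable (hw : ContDiff ℝ 1 w) (hsupp : HasCompactSupport w)

include hw hsupp in
lemma cwa_Iic {L : ℝ} (hL : 0 ≤ L) (hhh : ∀ z, |hh w z| ≤ L * |z|) :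
    ContinuousWithinAt (GG w) (Iic 0) 0 := by
  have hcont1 : Continuous fun x => -(ss x * gg w x ^ 2 / cc x ^ 5) :=
    ((continuous_ss.mul ((continuous_gg' hw).pow 2)).div (continuous_cc.pow 5)
      fun z => pow_ne_zero _ (cc_ne z)).neg
  have ht1 : Tendsto (fun x => -(ss x * gg w x ^ 2 / cc x ^ 5)) (nhdsWithin 0 (Iic 0))
      (𝓝 0) := by
    have h2 : Tendsto (fun x => -(ss x * gg w x ^ 2 / cc x ^ 5)) (nhdsWithin 0 (Iic 0))
        (𝓝 (-(ss 0 * gg w 0 ^ 2 / cc 0 ^ 5))) :=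
      (hcont1.tendsto 0).mono_left nhdsWithin_le_nhds
    simpa [ss_zero] using h2
  have ht2neg : Tendsto (fun x => -(hh w x ^ 2 / (cc x ^ 3 * ss x))) (nhdsWithin 0 (Iic 0))
      (𝓝 0) := by
    refine squeeze_zero' (g := fun t => L ^ 2 * -t) ?_ ?_ ?_
    · filter_upwards [self_mem_nhdsWithin] with t ht
      rw [neg_nonneg]
      have ht' : t ≤ (0:ℝ) := ht
      rcases eq_or_lt_of_le ht' with h0 | h0
      · rw [h0]
        simp [hh_zero, ss_zero]
      · exact div_nonpos_iff.mpr (Or.inl ⟨sq_nonneg _,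
          mul_nonpos_iff.mpr (Or.inl ⟨(pow_pos (cc_pos t) 3).le, ss_nonpos ht'⟩)⟩)
    · filter_upwards [self_mem_nhdsWithin] with t ht
      have ht' : t ≤ (0:ℝ) := ht
      rcases eq_or_lt_of_le ht' with h0 | h0
      · rw [h0]
        simp [hh_zero, ss_zero]
      · have hden : 0 < -t := by linarith
        have hss : ss t < 0 := lt_of_le_of_lt (ss_le_self h0.le) h0
        have hcs : -t ≤ cc t ^ 3 * -ss t := by
          have h2 : ss t ≤ t := ss_le_self h0.le
          have h3 : -ss t ≤ cc t ^ 3 * -ss t :=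
            le_mul_of_one_le_left (by linarith) (one_le_pow₀ (one_le_cc t))
          linarith
        have hnum : hh w t ^ 2 ≤ L ^ 2 * (-t) ^ 2 := by
          calc hh w t ^ 2 = |hh w t| ^ 2 := (sq_abs _).symm
            _ ≤ (L * |t|) ^ 2 := pow_le_pow_left₀ (abs_nonneg _) (hhh t) 2
            _ = L ^ 2 * (-t) ^ 2 := by rw [mul_pow, sq_abs]; ring
        have heq : -(hh w t ^ 2 / (cc t ^ 3 * ss t)) = hh w t ^ 2 / (cc t ^ 3 * -ss t) := by
          rw [mul_neg, div_neg]
        rw [heq]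
        calc hh w t ^ 2 / (cc t ^ 3 * -ss t) ≤ L ^ 2 * (-t) ^ 2 / (-t) :=
              div_le_div₀ (by positivity) hnum hden hcs
          _ = L ^ 2 * -t := by
              field_simp
    · have h2 : Tendsto (fun t : ℝ => L ^ 2 * -t) (nhdsWithin 0 (Iic 0))
          (𝓝 (L ^ 2 * -0)) :=
        ((continuous_const.mul continuous_neg).tendsto (0:ℝ)).mono_left nhdsWithin_le_nhds
      simpa using h2
  have ht2 : Tendsto (fun x => hh w x ^ 2 / (cc x ^ 3 * ss x)) (nhdsWithin 0 (Iic 0))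
      (𝓝 0) := by
    have := ht2neg.neg
    rw [neg_zero] at this
    refine this.congr fun x => ?_
    rw [neg_neg]
  have hsum := ht1.add ht2
  rw [add_zero] at hsum
  unfold ContinuousWithinAt
  rw [GG_zero]
  exact hsum

include hw hsupp in
theorem key_ineq (horth : (∫ z : ℝ, w z * (1 / Real.cosh (z / Real.sqrt 2)) ^ 2) = 0) :
    3 / 2 * (∫ z : ℝ, w z ^ 2) ≤ ∫ z : ℝ, PP w z := by
  obtain ⟨L, hL, hgd, hhh⟩ := exists_lip hw hsupp
  -- FTC on the two half lines
  have hEE_Ioi : IntegrableOn (EE w) (Ioi 0) := by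
    have h1 : IntegrableOn (fun z => PP w z - TT w z) (Ioi 0) :=
      ((integrable_PP hw hsupp).sub (integrable_TT hw hsupp)).integrableOn
    exact h1.sub (integrableOn_RR_Ioi hw hsupp)
  have hEE_Iic : IntegrableOn (EE w) (Iic 0) := by
    have h1 : IntegrableOn (fun z => PP w z - TT w z) (Iic 0) :=
      ((integrable_PP hw hsupp).sub (integrable_TT hw hsupp)).integrableOn
    exact h1.sub (integrableOn_RR_Iic hw hsupp)
  have hftc1 : ∫ z in Ioi 0, EE w z = 0 - GG w 0 :=
    integral_Ioi_of_hasDerivAt_of_tendsto (cwa_Ici hw hsupp hL hhh)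
      (fun x hx => hasDerivAt_GG hw (ne_of_gt hx)) hEE_Ioi (tendsto_GG_atTop hsupp)
  have hftc2 : ∫ z in Iic 0, EE w z = GG w 0 - 0 :=
    integral_Iic_of_hasDerivAt_of_tendsto (cwa_Iic hw hsupp hL hhh)
      (fun x hx => hasDerivAt_GG hw (ne_of_lt hx)) hEE_Iic (tendsto_GG_atBot hsupp)
  rw [GG_zero, sub_zero] at hftc2
  rw [GG_zero, sub_zero] at hftc1
  -- on each half line, ∫ TT ≤ ∫ PP
  have hsplit : ∀ (s : Set ℝ), MeasurableSet s → IntegrableOn (RR w) s →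
      (∫ z in s, EE w z) = 0 → (∫ z in s, TT w z) ≤ ∫ z in s, PP w z := by
    intro s hs hRs hEs
    have iPT : IntegrableOn (fun z => PP w z - TT w z) s :=
      ((integrable_PP hw hsupp).sub (integrable_TT hw hsupp)).integrableOn
    have iP : IntegrableOn (PP w) s := (integrable_PP hw hsupp).integrableOn
    have iT : IntegrableOn (TT w) s := (integrable_TT hw hsupp).integrableOn
    have h1 : (∫ z in s, EE w z)
        = (∫ z in s, PP w z) - (∫ z in s, TT w z) - ∫ z in s, RR w z := by
      have e1 : (∫ z in s, EE w z) = ∫ z in s, (PP w z - TT w z - RR w z) := rfl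
      rw [e1, integral_sub iPT hRs, integral_sub iP iT]
    have h2 : 0 ≤ ∫ z in s, RR w z :=
      setIntegral_nonneg hs fun z _ => RR_nonneg z
    rw [hEs] at h1
    linarith
  have hIoi := hsplit (Ioi 0) measurableSet_Ioi (integrableOn_RR_Ioi hw hsupp) hftc1
  have hIic := hsplit (Iic 0) measurableSet_Iic (integrableOn_RR_Iic hw hsupp) hftc2
  -- combine to the whole line
  have htot : ∀ f : ℝ → ℝ, Integrable f →
      (∫ z : ℝ, f z) = (∫ z in Iic 0, f z) + ∫ z in Ioi 0, f z := fun f hf =>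
    (intervalIntegral.integral_Iic_add_Ioi hf.integrableOn hf.integrableOn).symm
  have hPT : (∫ z : ℝ, TT w z) ≤ ∫ z : ℝ, PP w z := by
    rw [htot _ (integrable_PP hw hsupp), htot _ (integrable_TT hw hsupp)]
    linarith
  -- compute ∫ TT
  have hTT_eq : (∫ z : ℝ, TT w z)
      = 3 / 2 * (∫ z : ℝ, w z ^ 2)
        - 3 * w 0 * (∫ z : ℝ, w z * (1 / Real.cosh (z / Real.sqrt 2)) ^ 2)
        + 3 / 2 * w 0 ^ 2 * ∫ z : ℝ, (cc z ^ 4)⁻¹ := by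
    have hptw : TT w = fun z => (3 / 2 * w z ^ 2
        - 3 * w 0 * (w z * (1 / Real.cosh (z / Real.sqrt 2)) ^ 2))
        + 3 / 2 * w 0 ^ 2 * (cc z ^ 4)⁻¹ := by
      funext z
      have h1 := cc_ne z
      simp only [TT, hh, gg, cc] at *
      field_simp
      ring
    have i1 : Integrable (fun z : ℝ => 3 / 2 * w z ^ 2) :=
      (integrable_w_sq hw hsupp).const_mul _
    have i2 : Integrable (fun z : ℝ => 3 * w 0 * (w z * (1 / Real.cosh (z / Real.sqrt 2)) ^ 2)) :=
      (integrable_orth hw hsupp).const_mul _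
    have i3 : Integrable (fun z : ℝ => 3 / 2 * w 0 ^ 2 * (cc z ^ 4)⁻¹) :=
      (integrable_inv_cc_pow (by norm_num : 1 ≤ 4)).const_mul _
    have i12 : Integrable (fun z : ℝ => 3 / 2 * w z ^ 2
        - 3 * w 0 * (w z * (1 / Real.cosh (z / Real.sqrt 2)) ^ 2)) := i1.sub i2
    rw [hptw, integral_add i12 i3, integral_sub i1 i2,
      integral_const_mul, integral_const_mul, integral_const_mul]
  have hinv_nonneg : 0 ≤ ∫ z : ℝ, (cc z ^ 4)⁻¹ :=
    integral_nonneg fun z => inv_nonneg.2 (pow_pos (cc_pos z) 4).le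
  rw [horth] at hTT_eq
  have hfin : 3 / 2 * (∫ z : ℝ, w z ^ 2) ≤ ∫ z : ℝ, TT w z := by
    rw [hTT_eq]
    nlinarith [sq_nonneg (w 0)]
  linarith

end Props

end SpectralGapAux

open SpectralGapAux in
theorem spectral_gap_orthogonal_complement :
    ∃ μ : ℝ, 0 < μ ∧
      ∀ w : ℝ → ℝ, ContDiff ℝ 1 w → HasCompactSupport w →
        (∫ z : ℝ, w z * (1 / Real.cosh (z / Real.sqrt 2)) ^ 2) = 0 →
        μ * (∫ z : ℝ, (w z) ^ 2) ≤
          ∫ z : ℝ, ((deriv w z) ^ 2 + (3 * Real.tanh (z / Real.sqrt 2) ^ 2 - 1) * (w z) ^ 2) := by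
  refine ⟨3 / 2, by norm_num, fun w hw hsupp horth => ?_⟩
  exact key_ineq hw hsupp horth
end
end

section
/- (Divergence identity for the Allen–Cahn operator in Euclidean space) Let n ≥ 1, let X : ℝⁿ → ℝⁿ be a continuously differentiable vector field, let F : ℝ → ℝ be continuously differentiable with F(0) = 0, and let u : ℝⁿ → ℝ be a smooth compactly supported function. Setting e(x) = |∇u(x)|²/2 + F(u(x)), one has ∫_{ℝⁿ} (−Δu(x) + F'(u(x)))·⟨X(x), ∇u(x)⟩ dx = ∫_{ℝⁿ} ( ⟨DX(x)[∇u(x)], ∇u(x)⟩ − e(x)·div X(x) ) dx, where Δ is the Euclidean Laplacian, DX(x) is the total derivative of X at x, and div X = tr DX. -/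
open MeasureTheory
open scoped RealInnerProductSpace

/-- The Euclidean Laplacian of `u : ℝⁿ → ℝ`, as the sum of the pure second partial
derivatives in the coordinate directions. -/
noncomputable def lap {n : ℕ} (u : EuclideanSpace ℝ (Fin n) → ℝ)
    (x : EuclideanSpace ℝ (Fin n)) : ℝ :=
  ∑ i : Fin n,
    fderiv ℝ (fun y => fderiv ℝ u y (EuclideanSpace.single i 1)) x (EuclideanSpace.single i 1)

/-- The divergence of a vector field `X : ℝⁿ → ℝⁿ`, as the trace of its total derivative. -/
noncomputable def diverg {n : ℕ} (X : EuclideanSpace ℝ (Fin n) → EuclideanSpace ℝ (Fin n))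
    (x : EuclideanSpace ℝ (Fin n)) : ℝ :=
  LinearMap.trace ℝ (EuclideanSpace ℝ (Fin n)) (fderiv ℝ X x : _ →ₗ[ℝ] _)

namespace ACaux

variable {n : ℕ}

noncomputable abbrev sing (n : ℕ) (i : Fin n) : EuclideanSpace ℝ (Fin n) :=
  EuclideanSpace.single i (1:ℝ)

/-- First partial derivatives. -/
noncomputable def Pd (u : EuclideanSpace ℝ (Fin n) → ℝ) (i : Fin n)
    (x : EuclideanSpace ℝ (Fin n)) : ℝ := fderiv ℝ u x (sing n i)

/-- Second partial derivatives. -/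
noncomputable def Qd (u : EuclideanSpace ℝ (Fin n) → ℝ) (i j : Fin n)
    (x : EuclideanSpace ℝ (Fin n)) : ℝ := fderiv ℝ (Pd u j) x (sing n i)

/-- Coordinates of the vector field. -/
noncomputable def Xc (X : EuclideanSpace ℝ (Fin n) → EuclideanSpace ℝ (Fin n)) (j : Fin n)
    (x : EuclideanSpace ℝ (Fin n)) : ℝ := X x j

/-- Partial derivatives of the coordinates of the vector field. -/
noncomputable def Dc (X : EuclideanSpace ℝ (Fin n) → EuclideanSpace ℝ (Fin n)) (i j : Fin n)
    (x : EuclideanSpace ℝ (Fin n)) : ℝ := fderiv ℝ (Xc X j) x (sing n i)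

variable {u : EuclideanSpace ℝ (Fin n) → ℝ}
  {X : EuclideanSpace ℝ (Fin n) → EuclideanSpace ℝ (Fin n)}

lemma contP (hu : ContDiff ℝ (⊤ : ℕ∞) u) (i : Fin n) : ContDiff ℝ (⊤ : ℕ∞) (Pd u i) :=
  (ContinuousLinearMap.apply ℝ ℝ (sing n i)).contDiff.comp (hu.fderiv_right (by simp))

lemma hcsP (hsupp : HasCompactSupport u) (i : Fin n) : HasCompactSupport (Pd u i) :=
  (hsupp.fderiv ℝ).comp_left (g := fun L : EuclideanSpace ℝ (Fin n) →L[ℝ] ℝ => L (sing n i)) rfl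

lemma hcsQ (hsupp : HasCompactSupport u) (i j : Fin n) :
    HasCompactSupport (Qd u i j) :=
  ((hcsP hsupp j).fderiv ℝ).comp_left
    (g := fun L : EuclideanSpace ℝ (Fin n) →L[ℝ] ℝ => L (sing n i)) rfl

lemma contQ (hu : ContDiff ℝ (⊤ : ℕ∞) u) (i j : Fin n) : Continuous (Qd u i j) :=
  (((contP hu j).of_le (by simp)).continuous_fderiv one_ne_zero).clm_apply continuous_const

lemma contXc (hX : ContDiff ℝ 1 X) (j : Fin n) : ContDiff ℝ 1 (Xc X j) :=
  (EuclideanSpace.proj (𝕜 := ℝ) j).contDiff.comp hX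

lemma contDc (hX : ContDiff ℝ 1 X) (i j : Fin n) : Continuous (Dc X i j) :=
  ((contXc hX j).continuous_fderiv one_ne_zero).clm_apply continuous_const

lemma lap_eq (x : EuclideanSpace ℝ (Fin n)) : lap u x = ∑ i, Qd u i i x := rfl

lemma fderiv_Xc (hX : ContDiff ℝ 1 X) (j : Fin n) (x v : EuclideanSpace ℝ (Fin n)) :
    fderiv ℝ (Xc X j) x v = fderiv ℝ X x v j := by
  have h : fderiv ℝ (Xc X j) x =
      (EuclideanSpace.proj (𝕜 := ℝ) j).comp (fderiv ℝ X x) :=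
    ((EuclideanSpace.proj (𝕜 := ℝ) j).hasFDerivAt.comp x
      ((hX.differentiable one_ne_zero) x).hasFDerivAt).fderiv
  rw [h]; rfl

/-- Symmetry of the second derivatives. -/
lemma symmQ (hu : ContDiff ℝ (⊤ : ℕ∞) u) (i j : Fin n) (x : EuclideanSpace ℝ (Fin n)) :
    Qd u i j x = Qd u j i x := by
  have hsym : ∀ v w, fderiv ℝ (fderiv ℝ u) x v w = fderiv ℝ (fderiv ℝ u) x w v :=
    fun v w => (hu.contDiffAt.isSymmSndFDerivAt (by rw [minSmoothness_of_isRCLikeNormedField]; exact WithTop.coe_le_coe.mpr (le_top : (2:ℕ∞) ≤ ⊤))) v w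
  have hd : Differentiable ℝ (fderiv ℝ u) := (hu.fderiv_right (WithTop.coe_le_coe.mpr le_top)).differentiable one_ne_zero
  have key : ∀ k, fderiv ℝ (Pd u k) x =
      (ContinuousLinearMap.apply ℝ ℝ (sing n k)).comp (fderiv ℝ (fderiv ℝ u) x) := fun k =>
    ((ContinuousLinearMap.apply ℝ ℝ (sing n k)).hasFDerivAt.comp x (hd x).hasFDerivAt).fderiv
  simp only [Qd, key]
  exact hsym (sing n i) (sing n j)

lemma grad_coord (x : EuclideanSpace ℝ (Fin n)) (i : Fin n) :
    gradient u x i = Pd u i x := by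
  have h1 : ⟪gradient u x, sing n i⟫ = gradient u x i := by
    rw [EuclideanSpace.inner_single_right]; simp
  rw [← h1, gradient, InnerProductSpace.toDual_symm_apply]; rfl

lemma grad_sum (x : EuclideanSpace ℝ (Fin n)) :
    gradient u x = ∑ i, Pd u i x • sing n i := by
  conv_lhs => rw [← (EuclideanSpace.basisFun (Fin n) ℝ).sum_repr (gradient u x)]
  refine Finset.sum_congr rfl fun i _ => ?_
  rw [EuclideanSpace.basisFun_apply, EuclideanSpace.basisFun_repr, grad_coord]

lemma inner_eq_sum (a b : EuclideanSpace ℝ (Fin n)) : ⟪a, b⟫ = ∑ i, a i * b i := by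
  rw [PiLp.inner_apply]; simp [mul_comm]

lemma norm_sq_eq (a : EuclideanSpace ℝ (Fin n)) : ‖a‖ ^ 2 = ∑ i, a i * a i := by
  rw [← real_inner_self_eq_norm_sq, inner_eq_sum]

lemma trace_eq (T : EuclideanSpace ℝ (Fin n) →L[ℝ] EuclideanSpace ℝ (Fin n)) :
    LinearMap.trace ℝ (EuclideanSpace ℝ (Fin n))
      (T : EuclideanSpace ℝ (Fin n) →ₗ[ℝ] EuclideanSpace ℝ (Fin n))
      = ∑ i, T (sing n i) i := by
  rw [LinearMap.trace_eq_matrix_trace ℝ (EuclideanSpace.basisFun (Fin n) ℝ).toBasis]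
  simp [Matrix.trace, LinearMap.toMatrix_apply, EuclideanSpace.basisFun_apply]

lemma diverg_eq (hX : ContDiff ℝ 1 X) (x : EuclideanSpace ℝ (Fin n)) :
    diverg X x = ∑ i, Dc X i i x := by
  rw [diverg, trace_eq]
  exact Finset.sum_congr rfl fun i _ => (fderiv_Xc hX i x (sing n i)).symm

lemma cont_fderiv_apply {f : EuclideanSpace ℝ (Fin n) → ℝ} (hf : ContDiff ℝ 1 f)
    (v : EuclideanSpace ℝ (Fin n)) : Continuous fun x => fderiv ℝ f x v :=
  (hf.continuous_fderiv one_ne_zero).clm_apply continuous_const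

lemma hcs_fderiv_apply {f : EuclideanSpace ℝ (Fin n) → ℝ} (hf : HasCompactSupport f)
    (v : EuclideanSpace ℝ (Fin n)) : HasCompactSupport fun x => fderiv ℝ f x v :=
  (hf.fderiv ℝ).comp_left (g := fun L : EuclideanSpace ℝ (Fin n) →L[ℝ] ℝ => L v) rfl

/-- Integration by parts workhorse. -/
lemma ibp {f g : EuclideanSpace ℝ (Fin n) → ℝ} (hf : ContDiff ℝ 1 f) (hg : ContDiff ℝ 1 g)
    (hgc : HasCompactSupport g) (v : EuclideanSpace ℝ (Fin n)) :
    ∫ x, f x * fderiv ℝ g x v = - ∫ x, fderiv ℝ f x v * g x := by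
  apply integral_mul_fderiv_eq_neg_fderiv_mul_of_integrable
  · exact ((cont_fderiv_apply hf v).mul hg.continuous).integrable_of_hasCompactSupport
      (hgc.mul_left)
  · exact (hf.continuous.mul (cont_fderiv_apply hg v)).integrable_of_hasCompactSupport
      ((hcs_fderiv_apply hgc v).mul_left)
  · exact (hf.continuous.mul hg.continuous).integrable_of_hasCompactSupport hgc.mul_left
  · exact fun x _ => hf.differentiable one_ne_zero x
  · exact fun x _ => hg.differentiable one_ne_zero x

lemma fderiv_mul_dir {f g : EuclideanSpace ℝ (Fin n) → ℝ} {x v : EuclideanSpace ℝ (Fin n)}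
    (hf : DifferentiableAt ℝ f x) (hg : DifferentiableAt ℝ g x) :
    fderiv ℝ (fun y => f y * g y) x v = fderiv ℝ f x v * g x + f x * fderiv ℝ g x v := by
  rw [fderiv_fun_mul hf hg]
  simp only [ContinuousLinearMap.add_apply, ContinuousLinearMap.smul_apply, smul_eq_mul]
  ring

lemma fderiv_sum_dir {ι : Type*} (s : Finset ι) {f : ι → EuclideanSpace ℝ (Fin n) → ℝ}
    {x v : EuclideanSpace ℝ (Fin n)} (hf : ∀ i ∈ s, DifferentiableAt ℝ (f i) x) :
    fderiv ℝ (fun y => ∑ i ∈ s, f i y) x v = ∑ i ∈ s, fderiv ℝ (f i) x v := by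
  rw [fderiv_fun_sum hf]
  simp

lemma fderiv_comp_dir {F : ℝ → ℝ} {x v : EuclideanSpace ℝ (Fin n)}
    (hF : DifferentiableAt ℝ F (u x)) (hu : DifferentiableAt ℝ u x) :
    fderiv ℝ (fun y => F (u y)) x v = deriv F (u x) * fderiv ℝ u x v := by
  have h := (hF.hasDerivAt.comp_hasFDerivAt x hu.hasFDerivAt).fderiv
  have h2 : fderiv ℝ (fun y => F (u y)) x = deriv F (u x) • fderiv ℝ u x := h
  rw [h2]
  simp

lemma hcs_sum {ι : Type*} (s : Finset ι) (f : ι → EuclideanSpace ℝ (Fin n) → ℝ)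
    (h : ∀ i ∈ s, HasCompactSupport (f i)) :
    HasCompactSupport (fun x => ∑ i ∈ s, f i x) := by
  classical
  induction s using Finset.induction with
  | empty => simp only [Finset.sum_empty]; exact HasCompactSupport.zero
  | @insert a s ha ih =>
    simp only [Finset.sum_insert ha]
    exact (h a (Finset.mem_insert_self a s)).add
      (ih fun i hi => h i (Finset.mem_insert_of_mem hi))

end ACaux

open ACaux in
theorem divergence_identity_allen_cahn (n : ℕ) (hn : 1 ≤ n)
    (X : EuclideanSpace ℝ (Fin n) → EuclideanSpace ℝ (Fin n)) (hX : ContDiff ℝ 1 X)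
    (F : ℝ → ℝ) (hF : ContDiff ℝ 1 F) (hF0 : F 0 = 0)
    (u : EuclideanSpace ℝ (Fin n) → ℝ) (hu : ContDiff ℝ (⊤ : ℕ∞) u) (hsupp : HasCompactSupport u) :
    (∫ x : EuclideanSpace ℝ (Fin n),
        (-(lap u x) + deriv F (u x)) * ⟪X x, gradient u x⟫) =
      ∫ x : EuclideanSpace ℝ (Fin n),
        (⟪fderiv ℝ X x (gradient u x), gradient u x⟫
          - (‖gradient u x‖ ^ 2 / 2 + F (u x)) * diverg X x) := by
  classical
  -- regularity facts
  have hPc : ∀ i, ContDiff ℝ 1 (Pd u i) := fun i => (contP hu i).of_le (by simp)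
  have hPs : ∀ i, HasCompactSupport (Pd u i) := fun i => hcsP hsupp i
  have hQc : ∀ i j, Continuous (Qd u i j) := fun i j => contQ hu i j
  have hQs : ∀ i j, HasCompactSupport (Qd u i j) := fun i j => hcsQ hsupp i j
  have hYc : ∀ j, ContDiff ℝ 1 (Xc X j) := fun j => contXc hX j
  have hDcc : ∀ i j, Continuous (Dc X i j) := fun i j => contDc hX i j
  have hφC1 : ContDiff ℝ 1 (fun x => ∑ j, Xc X j x * Pd u j x) :=
    ContDiff.sum fun j _ => (hYc j).mul (hPc j)
  have hφcont : Continuous (fun x => ∑ j, Xc X j x * Pd u j x) := hφC1.continuous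
  have hefC1 : ContDiff ℝ 1 (fun x => (∑ i, Pd u i x * Pd u i x) / 2) :=
    (ContDiff.sum fun i _ => (hPc i).mul (hPc i)).div_const 2
  have hefs : HasCompactSupport (fun x => (∑ i, Pd u i x * Pd u i x) / 2) :=
    (hcs_sum Finset.univ (fun i x => Pd u i x * Pd u i x)
      fun i _ => (hPs i).mul_left).comp_left (g := fun t : ℝ => t / 2) (by norm_num)
  have hwC1 : ContDiff ℝ 1 (fun x => F (u x)) := hF.comp (hu.of_le (by simp))
  have hws : HasCompactSupport (fun x => F (u x)) := hsupp.comp_left (g := F) hF0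
  -- directional derivatives
  have hφder : ∀ (x : EuclideanSpace ℝ (Fin n)) (i : Fin n),
      fderiv ℝ (fun x => ∑ j, Xc X j x * Pd u j x) x (sing n i)
        = ∑ j, (Dc X i j x * Pd u j x + Xc X j x * Qd u i j x) := by
    intro x i
    rw [fderiv_sum_dir Finset.univ (f := fun j x => Xc X j x * Pd u j x) fun j _ =>
      (((hYc j).differentiable one_ne_zero) x).mul (((hPc j).differentiable one_ne_zero) x)]
    refine Finset.sum_congr rfl fun j _ => ?_
    rw [fderiv_mul_dir (((hYc j).differentiable one_ne_zero) x) (((hPc j).differentiable one_ne_zero) x)]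
    rfl
  have hefder : ∀ (x : EuclideanSpace ℝ (Fin n)) (j : Fin n),
      fderiv ℝ (fun x => (∑ i, Pd u i x * Pd u i x) / 2) x (sing n j)
        = ∑ i, Pd u i x * Qd u j i x := by
    intro x j
    have heq : (fun x : EuclideanSpace ℝ (Fin n) => (∑ i, Pd u i x * Pd u i x) / 2)
        = fun x => (∑ i, Pd u i x * Pd u i x) * (2:ℝ)⁻¹ := by
      funext y; ring
    rw [heq]
    have hd : DifferentiableAt ℝ (fun x => ∑ i, Pd u i x * Pd u i x) x :=
      DifferentiableAt.fun_sum fun i _ =>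
        (((hPc i).differentiable one_ne_zero) x).mul (((hPc i).differentiable one_ne_zero) x)
    rw [fderiv_mul_dir hd (differentiableAt_const _)]
    rw [fderiv_sum_dir Finset.univ (f := fun i x => Pd u i x * Pd u i x) fun i _ =>
      (((hPc i).differentiable one_ne_zero) x).mul (((hPc i).differentiable one_ne_zero) x)]
    have hconst : fderiv ℝ (fun _ : EuclideanSpace ℝ (Fin n) => (2:ℝ)⁻¹) x (sing n j) = 0 := by
      rw [fderiv_const_apply]; rfl
    rw [hconst]
    have hterm : ∀ i : Fin n, fderiv ℝ (fun y => Pd u i y * Pd u i y) x (sing n j)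
        = 2 * (Pd u i x * Qd u j i x) := by
      intro i
      rw [fderiv_mul_dir (((hPc i).differentiable one_ne_zero) x) (((hPc i).differentiable one_ne_zero) x)]
      show Qd u j i x * Pd u i x + Pd u i x * Qd u j i x = _
      ring
    rw [Finset.sum_congr rfl fun i _ => hterm i, ← Finset.mul_sum]
    ring
  have hwder : ∀ (x : EuclideanSpace ℝ (Fin n)) (j : Fin n),
      fderiv ℝ (fun y => F (u y)) x (sing n j) = deriv F (u x) * Pd u j x := by
    intro x j
    exact fderiv_comp_dir ((hF.differentiable one_ne_zero) (u x)) ((hu.differentiable (by simp)) x)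
  -- pointwise rewrites of inner products etc.
  have hinner : ∀ x, ⟪X x, gradient u x⟫ = ∑ j, Xc X j x * Pd u j x := by
    intro x
    rw [inner_eq_sum]
    exact Finset.sum_congr rfl fun j _ => by rw [grad_coord]; rfl
  have hDXG : ∀ x, ⟪fderiv ℝ X x (gradient u x), gradient u x⟫
      = ∑ i, ∑ j, Dc X i j x * Pd u j x * Pd u i x := by
    intro x
    rw [inner_eq_sum]
    have h1 : ∀ j, fderiv ℝ X x (gradient u x) j = ∑ i, Pd u i x * Dc X i j x := by
      intro j
      rw [← fderiv_Xc hX j x (gradient u x), grad_sum, map_sum]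
      refine Finset.sum_congr rfl fun i _ => ?_
      rw [(fderiv ℝ (Xc X j) x).map_smul, smul_eq_mul]
      rfl
    rw [Finset.sum_comm]
    refine Finset.sum_congr rfl fun j _ => ?_
    rw [h1 j, grad_coord, Finset.sum_mul]
    exact Finset.sum_congr rfl fun i _ => by ring
  have hnorm : ∀ x, ‖gradient u x‖ ^ 2 / 2 = (∑ i, Pd u i x * Pd u i x) / 2 := by
    intro x
    rw [norm_sq_eq]
    exact congrArg (· / 2) (Finset.sum_congr rfl fun i _ => by rw [grad_coord])
  have hdiv : ∀ x, diverg X x = ∑ i, Dc X i i x := fun x => diverg_eq hX x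
  have hlap : ∀ x : EuclideanSpace ℝ (Fin n), lap u x = ∑ i, Qd u i i x := fun x => lap_eq x
  -- integrability helper
  have hint : ∀ (f g : EuclideanSpace ℝ (Fin n) → ℝ), Continuous f → Continuous g →
      HasCompactSupport g → Integrable (fun x => f x * g x) := fun f g hf hg hgc =>
    (hf.mul hg).integrable_of_hasCompactSupport hgc.mul_left
  have hdivcont : Continuous (diverg X) := by
    have h : diverg X = fun x => ∑ i, Dc X i i x := funext hdiv
    rw [h]
    exact continuous_finset_sum _ fun i _ => hDcc i i
  -- Step 1: rewrite the LHS integrand and split into sums of integrals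
  have hintegrand : ∀ x, (-(lap u x) + deriv F (u x)) * ⟪X x, gradient u x⟫
      = (∑ i, (∑ j, Xc X j x * Pd u j x) * (-(Qd u i i x)))
        + ∑ j, Xc X j x * fderiv ℝ (fun y => F (u y)) x (sing n j) := by
    intro x
    rw [hinner x, hlap x]
    have h2 : ∑ j, Xc X j x * fderiv ℝ (fun y => F (u y)) x (sing n j)
        = deriv F (u x) * ∑ j, Xc X j x * Pd u j x := by
      rw [Finset.mul_sum]
      exact Finset.sum_congr rfl fun j _ => by rw [hwder]; ring
    rw [h2]
    have h4 : ∑ i, (∑ j, Xc X j x * Pd u j x) * -(Qd u i i x)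
        = (∑ j, Xc X j x * Pd u j x) * -(∑ i, Qd u i i x) := by
      rw [← Finset.mul_sum, ← Finset.sum_neg_distrib]
    rw [h4]
    ring
  have hI1 : ∀ i : Fin n,
      Integrable (fun x => (∑ j, Xc X j x * Pd u j x) * (-(Qd u i i x))) := fun i =>
    hint _ _ hφcont (hQc i i).neg (hQs i i).neg
  have hI2 : ∀ j : Fin n,
      Integrable (fun x => Xc X j x * fderiv ℝ (fun y => F (u y)) x (sing n j)) := fun j =>
    hint _ _ (hYc j).continuous (cont_fderiv_apply hwC1 (sing n j))
      (hcs_fderiv_apply hws (sing n j))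
  have hIDPP : ∀ i j : Fin n,
      Integrable (fun x => Dc X i j x * Pd u j x * Pd u i x) := fun i j =>
    hint (fun x => Dc X i j x * Pd u j x) (Pd u i)
      ((hDcc i j).mul (hPc j).continuous) (hPc i).continuous (hPs i)
  have hIYQP : ∀ i j : Fin n,
      Integrable (fun x => Xc X j x * (Qd u i j x * Pd u i x)) := fun i j =>
    hint (Xc X j) _ (hYc j).continuous ((hQc i j).mul (hPc i).continuous) (hPs i).mul_left
  have hLHS : (∫ x : EuclideanSpace ℝ (Fin n),
      (-(lap u x) + deriv F (u x)) * ⟪X x, gradient u x⟫)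
      = (∑ i, ∫ x, (∑ j, Xc X j x * Pd u j x) * (-(Qd u i i x)))
        + ∑ j, ∫ x, Xc X j x * fderiv ℝ (fun y => F (u y)) x (sing n j) := by
    simp only [hintegrand]
    rw [integral_add (integrable_finset_sum _ fun i _ => hI1 i)
        (integrable_finset_sum _ fun j _ => hI2 j),
      integral_finset_sum _ (fun i _ => hI1 i), integral_finset_sum _ (fun j _ => hI2 j)]
  -- Step 2: integrate by parts in the Laplacian term
  have stepA : ∀ i : Fin n, (∫ x, (∑ j, Xc X j x * Pd u j x) * (-(Qd u i i x)))
      = ∫ x, fderiv ℝ (fun x => ∑ j, Xc X j x * Pd u j x) x (sing n i) * Pd u i x := by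
    intro i
    have h := ibp hφC1 (hPc i) (hPs i) (sing n i)
    have h1 : (∫ x, (∑ j, Xc X j x * Pd u j x) * (-(Qd u i i x)))
        = - ∫ x, (∑ j, Xc X j x * Pd u j x) * Qd u i i x := by
      rw [← integral_neg]
      congr 1; funext x; ring
    have h2 : (∫ x, (∑ j, Xc X j x * Pd u j x) * Qd u i i x)
        = ∫ x, (∑ j, Xc X j x * Pd u j x) * fderiv ℝ (Pd u i) x (sing n i) := rfl
    rw [h1, h2, h, neg_neg]
  -- Step 3: expand the derivative of φ
  have stepB : ∀ i : Fin n,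
      (∫ x, fderiv ℝ (fun x => ∑ j, Xc X j x * Pd u j x) x (sing n i) * Pd u i x)
      = (∑ j, ∫ x, Dc X i j x * Pd u j x * Pd u i x)
        + ∑ j, ∫ x, Xc X j x * (Qd u i j x * Pd u i x) := by
    intro i
    have hpt : ∀ x, fderiv ℝ (fun x => ∑ j, Xc X j x * Pd u j x) x (sing n i) * Pd u i x
        = (∑ j, Dc X i j x * Pd u j x * Pd u i x)
          + ∑ j, Xc X j x * (Qd u i j x * Pd u i x) := by
      intro x
      rw [hφder, Finset.sum_mul, ← Finset.sum_add_distrib]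
      exact Finset.sum_congr rfl fun j _ => by ring
    simp only [hpt]
    rw [integral_add (integrable_finset_sum _ fun j _ => hIDPP i j)
        (integrable_finset_sum _ fun j _ => hIYQP i j),
      integral_finset_sum _ (fun j _ => hIDPP i j),
      integral_finset_sum _ (fun j _ => hIYQP i j)]
  -- Step 4: the first double sum is the integral of ⟪DX ∇u, ∇u⟫
  have step1 : (∑ i, ∑ j, ∫ x, Dc X i j x * Pd u j x * Pd u i x)
      = ∫ x, ⟪fderiv ℝ X x (gradient u x), gradient u x⟫ := by
    have h : ∀ i : Fin n, (∑ j, ∫ x, Dc X i j x * Pd u j x * Pd u i x)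
        = ∫ x, ∑ j, Dc X i j x * Pd u j x * Pd u i x := fun i =>
      (integral_finset_sum _ fun j _ => hIDPP i j).symm
    rw [Finset.sum_congr rfl fun i _ => h i,
      ← integral_finset_sum _ (fun i _ => integrable_finset_sum _ fun j _ => hIDPP i j)]
    exact integral_congr_ae (Filter.Eventually.of_forall fun x => (hDXG x).symm)
  -- Step 5: the second double sum gives the e₀ div X term
  have step2 : (∑ i, ∑ j, ∫ x, Xc X j x * (Qd u i j x * Pd u i x))
      = - ∫ x, ((∑ i, Pd u i x * Pd u i x) / 2) * diverg X x := by
    rw [Finset.sum_comm]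
    have hinner2 : ∀ j : Fin n, (∑ i, ∫ x, Xc X j x * (Qd u i j x * Pd u i x))
        = - ∫ x, Dc X j j x * ((∑ i, Pd u i x * Pd u i x) / 2) := by
      intro j
      have h1 : (∑ i, ∫ x, Xc X j x * (Qd u i j x * Pd u i x))
          = ∫ x, ∑ i, Xc X j x * (Qd u i j x * Pd u i x) :=
        (integral_finset_sum _ fun i _ => hIYQP i j).symm
      have h2 : ∀ x, (∑ i, Xc X j x * (Qd u i j x * Pd u i x))
          = Xc X j x * fderiv ℝ (fun x => (∑ i, Pd u i x * Pd u i x) / 2) x (sing n j) := by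
        intro x
        rw [hefder, Finset.mul_sum]
        refine Finset.sum_congr rfl fun i _ => ?_
        rw [symmQ hu i j x]
        ring
      rw [h1]
      simp only [h2]
      rw [ibp (hYc j) hefC1 hefs (sing n j)]
      rfl
    rw [Finset.sum_congr rfl fun j _ => hinner2 j, Finset.sum_neg_distrib, neg_inj]
    rw [← integral_finset_sum _ (fun j _ => hint (Dc X j j) _ (hDcc j j)
      hefC1.continuous hefs)]
    refine integral_congr_ae (Filter.Eventually.of_forall fun x => ?_)
    simp only [hdiv, Finset.mul_sum]
    exact Finset.sum_congr rfl fun j _ => by ring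
  -- Step 6: the potential term gives the F(u) div X term
  have step3 : (∑ j, ∫ x, Xc X j x * fderiv ℝ (fun y => F (u y)) x (sing n j))
      = - ∫ x, F (u x) * diverg X x := by
    have h1 : ∀ j : Fin n, (∫ x, Xc X j x * fderiv ℝ (fun y => F (u y)) x (sing n j))
        = - ∫ x, Dc X j j x * F (u x) := by
      intro j
      rw [ibp (hYc j) hwC1 hws (sing n j)]
      rfl
    rw [Finset.sum_congr rfl fun j _ => h1 j, Finset.sum_neg_distrib, neg_inj]
    rw [← integral_finset_sum _ (fun j _ => hint (Dc X j j) _ (hDcc j j)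
      hwC1.continuous hws)]
    refine integral_congr_ae (Filter.Eventually.of_forall fun x => ?_)
    simp only [hdiv, Finset.mul_sum]
    exact Finset.sum_congr rfl fun j _ => by ring
  -- Step 7: split the RHS
  have hRHS : (∫ x : EuclideanSpace ℝ (Fin n),
      (⟪fderiv ℝ X x (gradient u x), gradient u x⟫
        - (‖gradient u x‖ ^ 2 / 2 + F (u x)) * diverg X x))
      = (∫ x, ⟪fderiv ℝ X x (gradient u x), gradient u x⟫)
        - ((∫ x, ((∑ i, Pd u i x * Pd u i x) / 2) * diverg X x)
          + ∫ x, F (u x) * diverg X x) := by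
    have hptr : ∀ x : EuclideanSpace ℝ (Fin n),
        (⟪fderiv ℝ X x (gradient u x), gradient u x⟫
          - (‖gradient u x‖ ^ 2 / 2 + F (u x)) * diverg X x)
        = ⟪fderiv ℝ X x (gradient u x), gradient u x⟫
          - (((∑ i, Pd u i x * Pd u i x) / 2) * diverg X x + F (u x) * diverg X x) := by
      intro x
      rw [← hnorm]
      ring
    simp only [hptr]
    have hIg : Integrable
        (fun x => ⟪fderiv ℝ X x (gradient u x), gradient u x⟫ : _ → ℝ) := by
      have heq : (fun x => ⟪fderiv ℝ X x (gradient u x), gradient u x⟫ : _ → ℝ)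
          = fun x => ∑ i, ∑ j, Dc X i j x * Pd u j x * Pd u i x := funext hDXG
      rw [heq]
      exact integrable_finset_sum _ fun i _ => integrable_finset_sum _ fun j _ => hIDPP i j
    have hIe : Integrable (fun x => ((∑ i, Pd u i x * Pd u i x) / 2) * diverg X x) :=
      (hefC1.continuous.mul hdivcont).integrable_of_hasCompactSupport hefs.mul_right
    have hIw : Integrable (fun x => F (u x) * diverg X x) :=
      (hwC1.continuous.mul hdivcont).integrable_of_hasCompactSupport hws.mul_right
    have hIsum : Integrable (fun x => ((∑ i, Pd u i x * Pd u i x) / 2) * diverg X x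
        + F (u x) * diverg X x) := hIe.add hIw
    rw [integral_sub hIg hIsum, integral_add hIe hIw]
  -- Final assembly
  rw [hLHS, hRHS]
  rw [Finset.sum_congr rfl fun i _ => (stepA i).trans (stepB i)]
  rw [Finset.sum_add_distrib]
  rw [step1, step2, step3]
  ring
end
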